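/- arXiv:2012.09142 — 7 statements merged into one kernel-verified Lean document; each statement's English description precedes it below -/
import Mathlib

section
/- Let n ≥ 2 and let C_{n−1} denote the set of intervals {r, r+1, …, s} with 1 ≤ r ≤ s ≤ n−1. Fix arbitrary integers a_1, …, a_{n−1}. Then the number of functions f : C_{n−1} → ℤ satisfying f({i}) = a_i for all i, and 0 ≤ f(I ∪ J) − f(I) − f(J) ≤ 1 whenever I, J ∈ C_{n−1} are disjoint with I ∪ J ∈ C_{n−1}, is exactly (n−1)!. -/
/-- `I` is an interval of consecutive integers `{r, r+1, …, s}` with `1 ≤ r ≤ s ≤ n - 1`. -/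
def IsIvl (n : ℕ) (I : Finset ℕ) : Prop :=
  ∃ r s : ℕ, 1 ≤ r ∧ r ≤ s ∧ s ≤ n - 1 ∧ I = Finset.Icc r s

namespace Stmt1Proof

open Finset

/-- The split (superadditivity with defect in {0,1}) condition. -/
def Splits (g : ℕ → ℕ → ℤ) (m : ℕ) : Prop :=
  ∀ r k s : ℕ, 1 ≤ r → r ≤ k → k < s → s ≤ m →
    0 ≤ g r s - g r k - g (k+1) s ∧ g r s - g r k - g (k+1) s ≤ 1

/-- Solution set over total functions, with junk values pinned to 0. -/
def SolSet (m : ℕ) (a : ℕ → ℤ) : Set (ℕ → ℕ → ℤ) :=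
  {g | (∀ r s : ℕ, ¬(1 ≤ r ∧ r ≤ s ∧ s ≤ m) → g r s = 0) ∧
       (∀ r : ℕ, 1 ≤ r → r ≤ m → g r r = a r) ∧ Splits g m}

/-- The tournament relation: `Rel g m i j` means every valid extension `ε` has `ε i ≥ ε j`. -/
def Rel (g : ℕ → ℕ → ℤ) (m : ℕ) (i j : ℕ) : Prop :=
  (i < j ∧ g i m - g i (j-1) - g j m = 0) ∨ (j < i ∧ g j m - g j (i-1) - g i m = 1)

instance (g : ℕ → ℕ → ℤ) (m i j : ℕ) : Decidable (Rel g m i j) := by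
  unfold Rel; infer_instance

def key (g : ℕ → ℕ → ℤ) (m : ℕ) (r : ℕ) : ℕ :=
  ((Finset.Icc 1 m).filter (fun j => Rel g m j r)).card

section Rel

variable {g : ℕ → ℕ → ℤ} {m : ℕ}

lemma D01 (hsp : Splits g m) {i j : ℕ} (h1 : 1 ≤ i) (hij : i < j) (hj : j ≤ m) :
    g i m - g i (j-1) - g j m = 0 ∨ g i m - g i (j-1) - g j m = 1 := by
  have h := hsp i (j-1) m h1 (by omega) (by omega) le_rfl
  have e : j - 1 + 1 = j := by omega
  rw [e] at h
  omega

lemma rel_total (hsp : Splits g m) {i j : ℕ} (h1 : 1 ≤ i) (h1' : 1 ≤ j)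
    (him : i ≤ m) (hjm : j ≤ m) (hne : i ≠ j) : Rel g m i j ∨ Rel g m j i := by
  rcases lt_or_gt_of_ne hne with h | h
  · rcases D01 hsp h1 h hjm with h0 | h0
    · exact Or.inl (Or.inl ⟨h, h0⟩)
    · exact Or.inr (Or.inr ⟨h, h0⟩)
  · rcases D01 hsp h1' h him with h0 | h0
    · exact Or.inr (Or.inl ⟨h, h0⟩)
    · exact Or.inl (Or.inr ⟨h, h0⟩)

lemma rel_asymm {i j : ℕ} (h : Rel g m i j) (h' : Rel g m j i) : False := by
  rcases h with ⟨h, e⟩ | ⟨h, e⟩ <;> rcases h' with ⟨h', e'⟩ | ⟨h', e'⟩ <;> omega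

lemma rel_irrefl {i : ℕ} (h : Rel g m i i) : False := by
  rcases h with ⟨h, _⟩ | ⟨h, _⟩ <;> omega

lemma T1 (hsp : Splits g m) {i j k : ℕ} (h1 : 1 ≤ i) (hij : i < j) (hjk : j < k) (hk : k ≤ m)
    (e1 : g i m - g i (j-1) - g j m = 0) (e2 : g j m - g j (k-1) - g k m = 0) :
    g i m - g i (k-1) - g k m = 0 := by
  have A := hsp i (j-1) (k-1) h1 (by omega) (by omega) (by omega)
  have B := hsp i (k-1) m h1 (by omega) (by omega) le_rfl
  have ej : j - 1 + 1 = j := by omega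
  have ek : k - 1 + 1 = k := by omega
  rw [ej] at A; rw [ek] at B
  omega

lemma T2 (hsp : Splits g m) {i j k : ℕ} (h1 : 1 ≤ i) (hij : i < j) (hjk : j < k) (hk : k ≤ m)
    (e1 : g i m - g i (j-1) - g j m = 1) (e2 : g j m - g j (k-1) - g k m = 1) :
    g i m - g i (k-1) - g k m = 1 := by
  have A := hsp i (j-1) (k-1) h1 (by omega) (by omega) (by omega)
  have B := hsp i (k-1) m h1 (by omega) (by omega) le_rfl
  have ej : j - 1 + 1 = j := by omega
  have ek : k - 1 + 1 = k := by omega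
  rw [ej] at A; rw [ek] at B
  omega

lemma rel_trans (hsp : Splits g m) {x y z : ℕ} (hx1 : 1 ≤ x) (hy1 : 1 ≤ y) (hz1 : 1 ≤ z)
    (hxm : x ≤ m) (hym : y ≤ m) (hzm : z ≤ m)
    (hxy : Rel g m x y) (hyz : Rel g m y z) : Rel g m x z := by
  have hxz : x ≠ z := by
    rintro rfl; exact rel_asymm hxy hyz
  rcases hxy with ⟨hlt1, e1⟩ | ⟨hlt1, e1⟩ <;> rcases hyz with ⟨hlt2, e2⟩ | ⟨hlt2, e2⟩
  · -- x < y, D x y = 0 ; y < z, D y z = 0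
    exact Or.inl ⟨by omega, T1 hsp hx1 hlt1 hlt2 hzm e1 e2⟩
  · -- x < y, D x y = 0 ; z < y, D z y = 1
    rcases lt_or_gt_of_ne hxz with h | h
    · refine Or.inl ⟨h, ?_⟩
      rcases D01 hsp hx1 h hzm with h0 | h0
      · exact h0
      · exact absurd (T2 hsp hx1 h hlt2 hym h0 e2) (by omega)
    · refine Or.inr ⟨h, ?_⟩
      rcases D01 hsp hz1 h hxm with h0 | h0
      · exact absurd (T1 hsp hz1 h hlt1 hym h0 e1) (by omega)
      · exact h0
  · -- y < x, D y x = 1 ; y < z, D y z = 0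
    rcases lt_or_gt_of_ne hxz with h | h
    · refine Or.inl ⟨h, ?_⟩
      rcases D01 hsp hx1 h hzm with h0 | h0
      · exact h0
      · exact absurd (T2 hsp hy1 hlt1 h hzm e1 h0) (by omega)
    · refine Or.inr ⟨h, ?_⟩
      rcases D01 hsp hz1 h hxm with h0 | h0
      · exact absurd (T1 hsp hy1 hlt2 h hxm e2 h0) (by omega)
      · exact h0
  · -- y < x, D y x = 1 ; z < y, D z y = 1
    exact Or.inr ⟨by omega, T2 hsp hz1 hlt2 hlt1 hxm e2 e1⟩

lemma key_lt (hsp : Splits g m) {i j : ℕ} (h1i : 1 ≤ i) (him : i ≤ m) (h1j : 1 ≤ j)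
    (hjm : j ≤ m) (hij : Rel g m i j) : key g m i < key g m j := by
  have hsub : (Finset.Icc 1 m).filter (fun l => Rel g m l i) ⊆
      (Finset.Icc 1 m).filter (fun l => Rel g m l j) := by
    intro l hl
    rw [Finset.mem_filter] at hl ⊢
    refine ⟨hl.1, ?_⟩
    have hli := hl.2
    have hl1 := Finset.mem_Icc.mp hl.1
    have hlnej : l ≠ j := by
      rintro rfl; exact rel_asymm hli hij
    rcases rel_total hsp hl1.1 h1j hl1.2 hjm hlnej with h | h
    · exact h
    · exact absurd hij (fun hh => rel_asymm hh (rel_trans hsp h1j hl1.1 h1i hjm hl1.2 him h hli))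
  have hmem : i ∈ (Finset.Icc 1 m).filter (fun l => Rel g m l j) :=
    Finset.mem_filter.mpr ⟨Finset.mem_Icc.mpr ⟨h1i, him⟩, hij⟩
  have hnot : i ∉ (Finset.Icc 1 m).filter (fun l => Rel g m l i) := by
    intro h; exact rel_irrefl (Finset.mem_filter.mp h).2
  exact Finset.card_lt_card ((Finset.ssubset_iff_of_subset hsub).mpr ⟨i, hmem, hnot⟩)

lemma key_injOn (hsp : Splits g m) {i j : ℕ} (h1i : 1 ≤ i) (him : i ≤ m) (h1j : 1 ≤ j)
    (hjm : j ≤ m) (hne : i ≠ j) : key g m i ≠ key g m j := by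
  rcases rel_total hsp h1i h1j him hjm hne with h | h
  · exact ne_of_lt (key_lt hsp h1i him h1j hjm h)
  · exact (ne_of_lt (key_lt hsp h1j hjm h1i him h)).symm

lemma key_lt_m {r : ℕ} (h1 : 1 ≤ r) (hm : r ≤ m) : key g m r < m := by
  have hsub : (Finset.Icc 1 m).filter (fun l => Rel g m l r) ⊆ (Finset.Icc 1 m).erase r := by
    intro l hl
    rw [Finset.mem_filter] at hl
    rw [Finset.mem_erase]
    exact ⟨by rintro rfl; exact rel_irrefl hl.2, hl.1⟩
  have h2 : ((Finset.Icc 1 m).erase r).card = m - 1 := by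
    rw [Finset.card_erase_of_mem (Finset.mem_Icc.mpr ⟨h1, hm⟩), Nat.card_Icc]; omega
  have := Finset.card_le_card hsub
  unfold key
  omega

lemma key_image (hsp : Splits g m) :
    (Finset.Icc 1 m).image (key g m) = Finset.range m := by
  apply Finset.eq_of_subset_of_card_le
  · intro v hv
    rw [Finset.mem_image] at hv
    obtain ⟨r, hr, rfl⟩ := hv
    have := Finset.mem_Icc.mp hr
    exact Finset.mem_range.mpr (key_lt_m this.1 this.2)
  · rw [Finset.card_range, Finset.card_image_of_injOn, Nat.card_Icc]
    · omega
    · intro i hi j hj hk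
      by_contra hne
      have hi' := Finset.mem_Icc.mp hi
      have hj' := Finset.mem_Icc.mp hj
      exact key_injOn hsp hi'.1 hi'.2 hj'.1 hj'.2 hne hk

lemma keyCount (hsp : Splits g m) {p : ℕ} (hp : p ≤ m) :
    ((Finset.Icc 1 m).filter (fun r => key g m r < p)).card = p := by
  have hcard : ((Finset.Icc 1 m).filter (fun r => key g m r < p)).card
      = ((Finset.range m).filter (fun v => v < p)).card := by
    apply Finset.card_nbij (i := key g m)
    · intro r hr
      rw [Finset.mem_coe, Finset.mem_filter] at hr ⊢
      have := Finset.mem_Icc.mp hr.1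
      exact ⟨Finset.mem_range.mpr (key_lt_m this.1 this.2), hr.2⟩
    · intro i hi j hj hk
      simp only [Finset.coe_filter, Set.mem_setOf_eq] at hi hj
      by_contra hne
      have hi' := Finset.mem_Icc.mp hi.1
      have hj' := Finset.mem_Icc.mp hj.1
      exact key_injOn hsp hi'.1 hi'.2 hj'.1 hj'.2 hne hk
    · intro v hv
      simp only [Finset.coe_filter, Set.mem_setOf_eq] at hv
      have hv1 := Finset.mem_range.mp hv.1
      have : v ∈ (Finset.Icc 1 m).image (key g m) := by
        rw [key_image hsp]; exact Finset.mem_range.mpr hv1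
      rw [Finset.mem_image] at this
      obtain ⟨r, hr, rfl⟩ := this
      exact ⟨r, by simp only [Finset.coe_filter, Set.mem_setOf_eq]; exact ⟨hr, hv.2⟩, rfl⟩
  rw [hcard]
  have : (Finset.range m).filter (fun v => v < p) = Finset.range p := by
    ext x
    simp only [Finset.mem_filter, Finset.mem_range]
    omega
  rw [this, Finset.card_range]

end Rel

section Ext

variable (a : ℕ → ℤ) (m : ℕ)

/-- extension of a solution on `[1,m]` to `[1,m+1]`, using threshold `p` on `key`. -/
def extFun (g : ℕ → ℕ → ℤ) (p : ℕ) : ℕ → ℕ → ℤ := fun r s =>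
  if 1 ≤ r ∧ r ≤ m ∧ s = m + 1 then g r m + a (m+1) + (if key g m r < p then 1 else 0)
  else if r = m + 1 ∧ s = m + 1 then a (m+1)
  else g r s

/-- restriction of a solution on `[1,m+1]` to `[1,m]`. -/
def restr (G : ℕ → ℕ → ℤ) : ℕ → ℕ → ℤ := fun r s =>
  if 1 ≤ r ∧ r ≤ s ∧ s ≤ m then G r s else 0

lemma extFun_mem {g : ℕ → ℕ → ℤ} (hg : g ∈ SolSet m a) {p : ℕ} (hp : p ≤ m) :
    extFun a m g p ∈ SolSet (m+1) a := by
  obtain ⟨hj, hd, hsp⟩ := hg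
  refine ⟨?_, ?_, ?_⟩
  · intro r s h
    simp only [extFun]
    rw [if_neg (by omega), if_neg (by omega)]
    exact hj r s (by omega)
  · intro r h1 hm1
    simp only [extFun]
    by_cases hr : r = m + 1
    · subst hr
      split_ifs <;> first | rfl | omega
    · rw [if_neg (by omega), if_neg (by omega)]
      exact hd r h1 (by omega)
  · intro r k s h1 hrk hks hsm
    by_cases hsmall : s ≤ m
    · have h1' : extFun a m g p r s = g r s := by
        simp only [extFun]; rw [if_neg (by omega), if_neg (by omega)]
      have h2' : extFun a m g p r k = g r k := by
        simp only [extFun]; rw [if_neg (by omega), if_neg (by omega)]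
      have h3' : extFun a m g p (k+1) s = g (k+1) s := by
        simp only [extFun]; rw [if_neg (by omega), if_neg (by omega)]
      rw [h1', h2', h3']
      exact hsp r k s h1 hrk hks hsmall
    · have hs1 : s = m + 1 := by omega
      subst hs1
      have hkm : k ≤ m := by omega
      have hrm : r ≤ m := by omega
      have h1' : extFun a m g p r (m+1)
          = g r m + a (m+1) + (if key g m r < p then 1 else 0) := by
        simp only [extFun]; rw [if_pos ⟨h1, hrm, trivial⟩]
      have h2' : extFun a m g p r k = g r k := by
        simp only [extFun]; rw [if_neg (by omega), if_neg (by omega)]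
      rw [h1', h2']
      by_cases hk : k = m
      · have h3' : extFun a m g p (k+1) (m+1) = a (m+1) := by
          simp only [extFun, and_true]
          rw [if_neg (by omega), if_pos (show k + 1 = m + 1 by omega)]
        rw [h3', hk]
        split_ifs <;> constructor <;> omega
      · have hkm' : k + 1 ≤ m := by omega
        have h3' : extFun a m g p (k+1) (m+1)
            = g (k+1) m + a (m+1) + (if key g m (k+1) < p then 1 else 0) := by
          simp only [extFun]; rw [if_pos ⟨by omega, hkm', trivial⟩]
        rw [h3']
        have hD := hsp r k m h1 hrk (by omega) le_rfl
        have hD2 : g r m - g r k - g (k+1) m = 0 ∨ g r m - g r k - g (k+1) m = 1 := by omega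
        rcases hD2 with hD0 | hD1
        · have hR : Rel g m r (k+1) := Or.inl ⟨by omega, by simpa using hD0⟩
          have hkey := key_lt hsp h1 hrm (by omega) hkm' hR
          split_ifs <;> constructor <;> omega
        · have hR : Rel g m (k+1) r := Or.inr ⟨by omega, by simpa using hD1⟩
          have hkey := key_lt hsp (by omega) hkm' h1 hrm hR
          split_ifs <;> constructor <;> omega

lemma restr_mem {G : ℕ → ℕ → ℤ} (hG : G ∈ SolSet (m+1) a) : restr m G ∈ SolSet m a := by
  obtain ⟨hj, hd, hsp⟩ := hG
  refine ⟨?_, ?_, ?_⟩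
  · intro r s h
    simp only [restr]
    rw [if_neg h]
  · intro r h1 h2
    simp only [restr]
    rw [if_pos ⟨h1, le_rfl, h2⟩]
    exact hd r h1 (by omega)
  · intro r k s h1 hrk hks hsm
    have e1 : restr m G r s = G r s := by
      simp only [restr]; rw [if_pos ⟨h1, by omega, hsm⟩]
    have e2 : restr m G r k = G r k := by
      simp only [restr]; rw [if_pos ⟨h1, hrk, by omega⟩]
    have e3 : restr m G (k+1) s = G (k+1) s := by
      simp only [restr]; rw [if_pos ⟨by omega, by omega, hsm⟩]
    rw [e1, e2, e3]
    exact hsp r k s h1 hrk hks (by omega)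

lemma ext_bijective :
    Function.Bijective (fun x : ↥(SolSet m a) × Fin (m+1) =>
      (⟨extFun a m x.1.1 x.2.1, extFun_mem a m x.1.2 (Nat.lt_succ_iff.mp x.2.isLt)⟩ :
        ↥(SolSet (m+1) a))) := by
  constructor
  · rintro ⟨⟨g, hg⟩, p⟩ ⟨⟨g', hg'⟩, p'⟩ h
    simp only [Subtype.mk_eq_mk] at h
    have hgg : g = g' := by
      funext r s
      have hval := congrFun (congrFun h r) s
      by_cases hd : 1 ≤ r ∧ r ≤ s ∧ s ≤ m
      · have e1 : extFun a m g p r s = g r s := by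
          simp only [extFun]; rw [if_neg (by omega), if_neg (by omega)]
        have e2 : extFun a m g' p' r s = g' r s := by
          simp only [extFun]; rw [if_neg (by omega), if_neg (by omega)]
        rw [e1, e2] at hval
        exact hval
      · rw [hg.1 r s hd, hg'.1 r s hd]
    subst hgg
    have hsp := hg.2.2
    have hpm : (p : ℕ) ≤ m := Nat.lt_succ_iff.mp p.isLt
    have hpm' : (p' : ℕ) ≤ m := Nat.lt_succ_iff.mp p'.isLt
    have hiff : ∀ r ∈ Finset.Icc 1 m, (key g m r < (p : ℕ)) ↔ (key g m r < (p' : ℕ)) := by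
      intro r hr
      have hr' := Finset.mem_Icc.mp hr
      have hval := congrFun (congrFun h r) (m+1)
      have e1 : extFun a m g (p : ℕ) r (m+1)
          = g r m + a (m+1) + (if key g m r < (p : ℕ) then 1 else 0) := by
        simp only [extFun]; rw [if_pos ⟨hr'.1, hr'.2, trivial⟩]
      have e2 : extFun a m g (p' : ℕ) r (m+1)
          = g r m + a (m+1) + (if key g m r < (p' : ℕ) then 1 else 0) := by
        simp only [extFun]; rw [if_pos ⟨hr'.1, hr'.2, trivial⟩]
      rw [e1, e2] at hval
      have hval' : (if key g m r < (p : ℕ) then (1:ℤ) else 0)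
          = (if key g m r < (p' : ℕ) then (1:ℤ) else 0) := by omega
      split_ifs at hval' <;> omega
    have hpp : (p : ℕ) = (p' : ℕ) := by
      have c1 := keyCount hsp hpm
      have c2 := keyCount hsp hpm'
      rw [Finset.filter_congr hiff] at c1
      omega
    have hppf : p = p' := Fin.ext hpp
    subst hppf
    rfl
  · rintro ⟨G, hG⟩
    have hg : restr m G ∈ SolSet m a := restr_mem a m hG
    have hsp := hg.2.2
    have hdiagG : G (m+1) (m+1) = a (m+1) := hG.2.1 _ (by omega) le_rfl
    have hE : ∀ r, 1 ≤ r → r ≤ m →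
        G r (m+1) - G r m - a (m+1) = 0 ∨ G r (m+1) - G r m - a (m+1) = 1 := by
      intro r h1 h2
      have hh := hG.2.2 r m (m+1) h1 h2 (by omega) le_rfl
      rw [hdiagG] at hh
      omega
    have hgG : ∀ x y, 1 ≤ x → x ≤ y → y ≤ m → restr m G x y = G x y := by
      intro x y hx hxy hy
      simp only [restr]; rw [if_pos ⟨hx, hxy, hy⟩]
    have hMono : ∀ i j, 1 ≤ i → i ≤ m → 1 ≤ j → j ≤ m → Rel (restr m G) m i j →
        G j (m+1) - G j m - a (m+1) ≤ G i (m+1) - G i m - a (m+1) := by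
      intro i j h1i him h1j hjm hR
      rcases hR with ⟨hlt, he⟩ | ⟨hlt, he⟩
      · rw [hgG i m h1i him le_rfl, hgG i (j-1) h1i (by omega) (by omega),
          hgG j m h1j hjm le_rfl] at he
        have hc := hG.2.2 i (j-1) (m+1) h1i (by omega) (by omega) le_rfl
        have ej : j - 1 + 1 = j := by omega
        rw [ej] at hc
        omega
      · rw [hgG j m h1j hjm le_rfl, hgG j (i-1) h1j (by omega) (by omega),
          hgG i m h1i him le_rfl] at he
        have hc := hG.2.2 j (i-1) (m+1) h1j (by omega) (by omega) le_rfl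
        have ei : i - 1 + 1 = i := by omega
        rw [ei] at hc
        omega
    set A : Finset ℕ :=
      (Finset.Icc 1 m).filter (fun t => G t (m+1) - G t m - a (m+1) = 1) with hA
    have hpA : A.card ≤ m := by
      have hcf := Finset.card_filter_le (Finset.Icc 1 m)
        (fun t => G t (m+1) - G t m - a (m+1) = 1)
      rw [Nat.card_Icc] at hcf
      rw [hA]
      omega
    have hBA : (Finset.Icc 1 m).filter (fun t => key (restr m G) m t < A.card) ⊆ A := by
      intro t ht
      rw [Finset.mem_filter] at ht
      have ht' := Finset.mem_Icc.mp ht.1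
      rw [hA, Finset.mem_filter]
      refine ⟨ht.1, ?_⟩
      by_contra hne
      have hE0 : G t (m+1) - G t m - a (m+1) = 0 := by
        rcases hE t ht'.1 ht'.2 with h0 | h1'
        · exact h0
        · exact absurd h1' hne
      have hsubA : A ⊆ (Finset.Icc 1 m).filter
          (fun l => key (restr m G) m l < key (restr m G) m t) := by
        intro l hl
        rw [hA, Finset.mem_filter] at hl
        have hl' := Finset.mem_Icc.mp hl.1
        rw [Finset.mem_filter]
        refine ⟨hl.1, ?_⟩
        have hlt : l ≠ t := by
          rintro rfl
          omega
        have hRlt : Rel (restr m G) m l t := by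
          rcases rel_total hsp hl'.1 ht'.1 hl'.2 ht'.2 hlt with hh | hh
          · exact hh
          · exact absurd (hMono t l ht'.1 ht'.2 hl'.1 hl'.2 hh) (by omega)
        exact key_lt hsp hl'.1 hl'.2 ht'.1 ht'.2 hRlt
      have hkeyt : key (restr m G) m t < m := key_lt_m ht'.1 ht'.2
      have hcc := Finset.card_le_card hsubA
      rw [keyCount hsp (le_of_lt hkeyt)] at hcc
      omega
    have hcardB : ((Finset.Icc 1 m).filter (fun t => key (restr m G) m t < A.card)).card
        = A.card := keyCount hsp hpA
    have hAB : A = (Finset.Icc 1 m).filter (fun t => key (restr m G) m t < A.card) :=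
      (Finset.eq_of_subset_of_card_le hBA (le_of_eq hcardB.symm)).symm
    refine ⟨⟨⟨restr m G, hg⟩, ⟨A.card, by omega⟩⟩, ?_⟩
    apply Subtype.ext
    funext r s
    simp only
    by_cases hc1 : 1 ≤ r ∧ r ≤ m ∧ s = m+1
    · obtain ⟨h1, hrm, hs⟩ := hc1
      subst hs
      have e1 : extFun a m (restr m G) A.card r (m+1)
          = restr m G r m + a (m+1) + (if key (restr m G) m r < A.card then 1 else 0) := by
        simp only [extFun]; rw [if_pos ⟨h1, hrm, trivial⟩]
      rw [e1, hgG r m h1 hrm le_rfl]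
      have hmem := Finset.ext_iff.mp hAB r
      simp only [hA, Finset.mem_filter, Finset.mem_Icc] at hmem
      rcases hE r h1 hrm with h0 | h1'
      · have hnot : ¬ (key (restr m G) m r < A.card) := fun hh => by
          have := hmem.mpr ⟨⟨h1, hrm⟩, hh⟩
          omega
        rw [if_neg hnot]
        omega
      · have hyes : key (restr m G) m r < A.card := (hmem.mp ⟨⟨h1, hrm⟩, h1'⟩).2
        rw [if_pos hyes]
        omega
    · by_cases hc2 : r = m + 1 ∧ s = m + 1
      · obtain ⟨hr, hs⟩ := hc2
        subst hr; subst hs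
        have e1 : extFun a m (restr m G) A.card (m+1) (m+1) = a (m+1) := by
          simp only [extFun, and_true]
          rw [if_neg (by omega), if_pos trivial]
        rw [e1, hdiagG]
      · have e1 : extFun a m (restr m G) A.card r s = restr m G r s := by
          simp only [extFun]; rw [if_neg hc1, if_neg hc2]
        rw [e1]
        by_cases hd : 1 ≤ r ∧ r ≤ s ∧ s ≤ m
        · exact hgG r s hd.1 hd.2.1 hd.2.2
        · simp only [restr]
          rw [if_neg hd]
          exact (hG.1 r s (by omega)).symm

end Ext

lemma card_solSet (a : ℕ → ℤ) : ∀ m : ℕ, Nat.card (SolSet m a) = Nat.factorial m := by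
  intro m
  induction m with
  | zero =>
    have hsing : SolSet 0 a = {fun _ _ => (0:ℤ)} := by
      apply Set.eq_singleton_iff_unique_mem.mpr
      constructor
      · refine ⟨fun r s _ => rfl, fun r h1 h2 => by omega, fun r k s h1 hrk hks hsm => by omega⟩
      · intro g hg
        funext r s
        exact hg.1 r s (by omega)
    rw [hsing]
    simp [Nat.card_unique]
  | succ m ih =>
    have hc := Nat.card_eq_of_bijective _ (ext_bijective a m)
    rw [Nat.card_prod, Nat.card_eq_fintype_card (α := Fin (m+1)), Fintype.card_fin, ih] at hc
    rw [← hc, Nat.factorial_succ, mul_comm]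


section Front

lemma isIvl_nonempty {n : ℕ} {I : Finset ℕ} (h : IsIvl n I) : I.Nonempty := by
  obtain ⟨r, s, h1, h2, h3, rfl⟩ := h
  exact Finset.nonempty_Icc.mpr h2

lemma min'_Icc {r s : ℕ} (h : r ≤ s) (hne : (Finset.Icc r s).Nonempty) :
    (Finset.Icc r s).min' hne = r :=
  le_antisymm (Finset.min'_le _ _ (Finset.mem_Icc.mpr ⟨le_rfl, h⟩))
    (Finset.le_min' _ _ _ fun y hy => (Finset.mem_Icc.mp hy).1)

lemma max'_Icc {r s : ℕ} (h : r ≤ s) (hne : (Finset.Icc r s).Nonempty) :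
    (Finset.Icc r s).max' hne = s :=
  le_antisymm (Finset.max'_le _ _ _ fun y hy => (Finset.mem_Icc.mp hy).2)
    (Finset.le_max' _ _ (Finset.mem_Icc.mpr ⟨h, le_rfl⟩))

lemma spec' {I : Finset ℕ} {r s : ℕ} (h2 : r ≤ s) (hEq : I = Finset.Icc r s)
    (hne : I.Nonempty) : I.min' hne = r ∧ I.max' hne = s := by
  subst hEq
  exact ⟨min'_Icc h2 _, max'_Icc h2 _⟩

lemma Icc_union {r k s : ℕ} (h1 : r ≤ k) (h2 : k < s) :
    Finset.Icc r k ∪ Finset.Icc (k+1) s = Finset.Icc r s := by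
  ext x
  simp only [Finset.mem_union, Finset.mem_Icc]
  omega

lemma Icc_disj {r k s : ℕ} : Disjoint (Finset.Icc r k) (Finset.Icc (k+1) s) := by
  rw [Finset.disjoint_left]
  intro x hx hx'
  rw [Finset.mem_Icc] at hx hx'
  omega

lemma adj {r1 s1 r2 s2 r s : ℕ} (h1 : r1 ≤ s1) (h2 : r2 ≤ s2) (hrs : r ≤ s)
    (hdisj : Disjoint (Finset.Icc r1 s1) (Finset.Icc r2 s2))
    (hun : Finset.Icc r1 s1 ∪ Finset.Icc r2 s2 = Finset.Icc r s) :
    (s1 + 1 = r2 ∧ r = r1 ∧ s = s2) ∨ (s2 + 1 = r1 ∧ r = r2 ∧ s = s1) := by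
  have H : ∀ x : ℕ, (r1 ≤ x ∧ x ≤ s1) ∨ (r2 ≤ x ∧ x ≤ s2) ↔ (r ≤ x ∧ x ≤ s) := by
    intro x
    have hx := Finset.ext_iff.mp hun x
    simpa [Finset.mem_union, Finset.mem_Icc] using hx
  have hd1 : ¬((r1 ≤ r2 ∧ r2 ≤ s1) ∧ (r2 ≤ r2 ∧ r2 ≤ s2)) := fun hx =>
    Finset.disjoint_left.mp hdisj (Finset.mem_Icc.mpr hx.1) (Finset.mem_Icc.mpr hx.2)
  have hd2 : ¬((r1 ≤ r1 ∧ r1 ≤ s1) ∧ (r2 ≤ r1 ∧ r1 ≤ s2)) := fun hx =>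
    Finset.disjoint_left.mp hdisj (Finset.mem_Icc.mpr hx.1) (Finset.mem_Icc.mpr hx.2)
  have A1 := H r1
  have A2 := H r2
  have A3 := H s1
  have A4 := H s2
  have A5 := H r
  have A6 := H s
  have A7 := H (s1+1)
  have A8 := H (s2+1)
  omega

variable (n : ℕ) (a : ℕ → ℤ)

/-- the set appearing in the theorem statement -/
def FSet : Set ({I : Finset ℕ // IsIvl n I} → ℤ) :=
  {f | (∀ i : ℕ, 1 ≤ i → i ≤ n - 1 → ∀ h : IsIvl n {i}, f ⟨{i}, h⟩ = a i) ∧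
      (∀ I J : {I : Finset ℕ // IsIvl n I}, Disjoint I.1 J.1 →
        ∀ h : IsIvl n (I.1 ∪ J.1),
          0 ≤ f ⟨I.1 ∪ J.1, h⟩ - f I - f J ∧ f ⟨I.1 ∪ J.1, h⟩ - f I - f J ≤ 1)}

def toG (f : {I : Finset ℕ // IsIvl n I} → ℤ) : ℕ → ℕ → ℤ := fun r s =>
  if h : 1 ≤ r ∧ r ≤ s ∧ s ≤ n - 1 then
    f ⟨Finset.Icc r s, ⟨r, s, h.1, h.2.1, h.2.2, rfl⟩⟩
  else 0

def toF (g : ℕ → ℕ → ℤ) : {I : Finset ℕ // IsIvl n I} → ℤ := fun I =>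
  g (I.1.min' (isIvl_nonempty I.2)) (I.1.max' (isIvl_nonempty I.2))

lemma f_congr (f : {I : Finset ℕ // IsIvl n I} → ℤ) {I J : Finset ℕ}
    {hI : IsIvl n I} {hJ : IsIvl n J} (h : I = J) : f ⟨I, hI⟩ = f ⟨J, hJ⟩ := by
  subst h
  rfl

lemma toF_toG (f : {I : Finset ℕ // IsIvl n I} → ℤ) : toF n (toG n f) = f := by
  funext I
  rcases I with ⟨I, hI⟩
  obtain ⟨r, s, h1, h2, h3, hEq⟩ := id hI
  show toG n f (I.min' _) (I.max' _) = f ⟨I, hI⟩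
  rw [(spec' h2 hEq _).1, (spec' h2 hEq _).2]
  unfold toG
  rw [dif_pos ⟨h1, h2, h3⟩]
  exact f_congr n f hEq.symm

lemma toG_toF {g : ℕ → ℕ → ℤ} (hg : g ∈ SolSet (n-1) a) : toG n (toF n g) = g := by
  funext r s
  by_cases hd : 1 ≤ r ∧ r ≤ s ∧ s ≤ n - 1
  · unfold toG
    rw [dif_pos hd]
    show g ((Finset.Icc r s).min' _) ((Finset.Icc r s).max' _) = g r s
    rw [min'_Icc hd.2.1, max'_Icc hd.2.1]
  · unfold toG
    rw [dif_neg hd]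
    exact (hg.1 r s hd).symm

lemma toG_mem {f : {I : Finset ℕ // IsIvl n I} → ℤ} (hf : f ∈ FSet n a) :
    toG n f ∈ SolSet (n-1) a := by
  obtain ⟨hf1, hf2⟩ := hf
  refine ⟨?_, ?_, ?_⟩
  · intro r s h
    unfold toG
    rw [dif_neg h]
  · intro r h1 h2
    have hIv : IsIvl n {r} := ⟨r, r, h1, le_rfl, h2, (Finset.Icc_self r).symm⟩
    unfold toG
    rw [dif_pos ⟨h1, le_rfl, h2⟩]
    refine (f_congr n f (Finset.Icc_self r) (hJ := hIv)).trans ?_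
    exact hf1 r h1 h2 hIv
  · intro r k s h1 hrk hks hsm
    have hIvI : IsIvl n (Finset.Icc r k) := ⟨r, k, h1, hrk, by omega, rfl⟩
    have hIvJ : IsIvl n (Finset.Icc (k+1) s) := ⟨k+1, s, by omega, by omega, hsm, rfl⟩
    set I : {I : Finset ℕ // IsIvl n I} := ⟨Finset.Icc r k, hIvI⟩ with hIdef
    set J : {I : Finset ℕ // IsIvl n I} := ⟨Finset.Icc (k+1) s, hIvJ⟩ with hJdef
    have hu : I.1 ∪ J.1 = Finset.Icc r s := Icc_union hrk hks
    have hIv : IsIvl n (I.1 ∪ J.1) := by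
      rw [hu]
      exact ⟨r, s, h1, by omega, hsm, rfl⟩
    have hbd := hf2 I J Icc_disj hIv
    have e0 : toG n f r s = f ⟨I.1 ∪ J.1, hIv⟩ := by
      unfold toG
      rw [dif_pos ⟨h1, by omega, hsm⟩]
      exact f_congr n f hu.symm
    have e1 : toG n f r k = f I := by
      unfold toG
      rw [dif_pos ⟨h1, hrk, by omega⟩]
    have e2 : toG n f (k+1) s = f J := by
      unfold toG
      rw [dif_pos ⟨by omega, by omega, hsm⟩]
    rw [e0, e1, e2]
    exact hbd

lemma toF_mem {g : ℕ → ℕ → ℤ} (hg : g ∈ SolSet (n-1) a) : toF n g ∈ FSet n a := by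
  obtain ⟨hj, hd, hsp⟩ := hg
  constructor
  · intro i h1 h2 hIv
    show g (Finset.min' _ _) (Finset.max' _ _) = a i
    rw [(spec' le_rfl (Finset.Icc_self i).symm _).1, (spec' le_rfl (Finset.Icc_self i).symm _).2]
    exact hd i h1 h2
  · intro I J hdisj hU
    obtain ⟨r1, s1, hI1, hI2, hI3, hIEq⟩ := id I.2
    obtain ⟨r2, s2, hJ1, hJ2, hJ3, hJEq⟩ := id J.2
    obtain ⟨r, s, hU1, hU2, hU3, hUEq⟩ := id hU
    have hdisj' : Disjoint (Finset.Icc r1 s1) (Finset.Icc r2 s2) := by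
      rw [← hIEq, ← hJEq]
      exact hdisj
    have hun : Finset.Icc r1 s1 ∪ Finset.Icc r2 s2 = Finset.Icc r s := by
      rw [← hIEq, ← hJEq]
      exact hUEq
    have eI : toF n g I = g r1 s1 := by
      show g (Finset.min' _ _) (Finset.max' _ _) = g r1 s1
      rw [(spec' hI2 hIEq _).1, (spec' hI2 hIEq _).2]
    have eJ : toF n g J = g r2 s2 := by
      show g (Finset.min' _ _) (Finset.max' _ _) = g r2 s2
      rw [(spec' hJ2 hJEq _).1, (spec' hJ2 hJEq _).2]
    have eU : toF n g ⟨I.1 ∪ J.1, hU⟩ = g r s := by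
      show g (Finset.min' _ _) (Finset.max' _ _) = g r s
      rw [(spec' hU2 hUEq _).1, (spec' hU2 hUEq _).2]
    rw [eI, eJ, eU]
    rcases adj hI2 hJ2 hU2 hdisj' hun with ⟨hc1, hc2, hc3⟩ | ⟨hc1, hc2, hc3⟩
    · rw [hc2, hc3]
      have hb := hsp r1 s1 s2 hI1 hI2 (by omega) hJ3
      rw [show s1 + 1 = r2 from hc1] at hb
      exact hb
    · rw [hc2, hc3]
      have hb := hsp r2 s2 s1 hJ1 hJ2 (by omega) hI3
      rw [show s2 + 1 = r1 from hc1] at hb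
      omega

lemma card_FSet : Nat.card (FSet n a) = Nat.card (SolSet (n-1) a) := by
  apply Nat.card_eq_of_bijective
    (fun x : ↥(FSet n a) => (⟨toG n x.1, toG_mem n a x.2⟩ : ↥(SolSet (n-1) a)))
  constructor
  · rintro ⟨f, hf⟩ ⟨f', hf'⟩ h
    simp only [Subtype.mk_eq_mk] at h
    apply Subtype.ext
    have := congrArg (toF n) h
    rwa [toF_toG n f, toF_toG n f'] at this
  · rintro ⟨g, hg⟩
    exact ⟨⟨toF n g, toF_mem n a hg⟩, Subtype.ext (toG_toF n a hg)⟩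

end Front

end Stmt1Proof

theorem stmt_1 (n : ℕ) (hn : 2 ≤ n) (a : ℕ → ℤ) :
    Nat.card {f : {I : Finset ℕ // IsIvl n I} → ℤ |
      (∀ i : ℕ, 1 ≤ i → i ≤ n - 1 → ∀ h : IsIvl n {i}, f ⟨{i}, h⟩ = a i) ∧
      (∀ I J : {I : Finset ℕ // IsIvl n I}, Disjoint I.1 J.1 →
        ∀ h : IsIvl n (I.1 ∪ J.1),
          0 ≤ f ⟨I.1 ∪ J.1, h⟩ - f I - f J ∧ f ⟨I.1 ∪ J.1, h⟩ - f I - f J ≤ 1)} =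
    Nat.factorial (n - 1) := by
  have h := Stmt1Proof.card_FSet n a
  have h2 := Stmt1Proof.card_solSet a (n-1)
  calc Nat.card {f : {I : Finset ℕ // IsIvl n I} → ℤ |
      (∀ i : ℕ, 1 ≤ i → i ≤ n - 1 → ∀ h : IsIvl n {i}, f ⟨{i}, h⟩ = a i) ∧
      (∀ I J : {I : Finset ℕ // IsIvl n I}, Disjoint I.1 J.1 →
        ∀ h : IsIvl n (I.1 ∪ J.1),
          0 ≤ f ⟨I.1 ∪ J.1, h⟩ - f I - f J ∧ f ⟨I.1 ∪ J.1, h⟩ - f I - f J ≤ 1)}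
      = Nat.card (Stmt1Proof.FSet n a) := rfl
    _ = Nat.card (Stmt1Proof.SolSet (n-1) a) := h
    _ = Nat.factorial (n - 1) := h2
end

section
/- Fix n ≥ 6 and define f on nonempty subsets I ⊆ {1, …, n−1} by f(I) = 1 if {1,3,5} ⊆ I or {2,4,5} ⊆ I, and f(I) = 0 otherwise. Then there exists no vector x = (x_1, …, x_{n−1}) ∈ ℝ^{n−1} such that f(I) < ∑_{i∈I} x_i < f(I) + 1 holds for all nonempty subsets I ⊆ {1, …, n−1}. -/
theorem stmt_5 (n : ℕ) (hn : 6 ≤ n)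
    (f : Finset ℕ → ℤ)
    (hf : ∀ I : Finset ℕ,
      f I = if ({1, 3, 5} : Finset ℕ) ⊆ I ∨ ({2, 4, 5} : Finset ℕ) ⊆ I then 1 else 0) :
    ¬∃ x : ℕ → ℝ, ∀ I : Finset ℕ, I ⊆ Finset.Icc 1 (n - 1) → I.Nonempty →
      (f I : ℝ) < ∑ i ∈ I, x i ∧ (∑ i ∈ I, x i) < (f I : ℝ) + 1 := by
  rintro ⟨x, hx⟩
  have hmem : ∀ i : ℕ, 1 ≤ i → i ≤ 5 → i ∈ Finset.Icc 1 (n - 1) := by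
    intro i h1 h2; rw [Finset.mem_Icc]; omega
  have hsub : ∀ I : Finset ℕ, I ⊆ {1, 2, 3, 4, 5} → I ⊆ Finset.Icc 1 (n - 1) := by
    intro I hI a ha
    have h := hI ha
    fin_cases h <;> exact hmem _ (by norm_num) (by norm_num)
  have h135 := hx {1, 3, 5} (hsub _ (by decide)) (by decide)
  have h245 := hx {2, 4, 5} (hsub _ (by decide)) (by decide)
  have h145 := hx {1, 4, 5} (hsub _ (by decide)) (by decide)
  have h235 := hx {2, 3, 5} (hsub _ (by decide)) (by decide)
  have e1 : f {1, 3, 5} = 1 := by rw [hf, if_pos (Or.inl (by decide))]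
  have e2 : f {2, 4, 5} = 1 := by rw [hf, if_pos (Or.inr (by decide))]
  have e3 : f {1, 4, 5} = 0 := by
    rw [hf, if_neg]; push_neg; exact ⟨by decide, by decide⟩
  have e4 : f {2, 3, 5} = 0 := by
    rw [hf, if_neg]; push_neg; exact ⟨by decide, by decide⟩
  have s1 : ∑ i ∈ ({1, 3, 5} : Finset ℕ), x i = x 1 + x 3 + x 5 := by
    rw [Finset.sum_insert (by decide), Finset.sum_insert (by decide),
      Finset.sum_singleton]; ring
  have s2 : ∑ i ∈ ({2, 4, 5} : Finset ℕ), x i = x 2 + x 4 + x 5 := by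
    rw [Finset.sum_insert (by decide), Finset.sum_insert (by decide),
      Finset.sum_singleton]; ring
  have s3 : ∑ i ∈ ({1, 4, 5} : Finset ℕ), x i = x 1 + x 4 + x 5 := by
    rw [Finset.sum_insert (by decide), Finset.sum_insert (by decide),
      Finset.sum_singleton]; ring
  have s4 : ∑ i ∈ ({2, 3, 5} : Finset ℕ), x i = x 2 + x 3 + x 5 := by
    rw [Finset.sum_insert (by decide), Finset.sum_insert (by decide),
      Finset.sum_singleton]; ring
  rw [e1, s1] at h135
  rw [e2, s2] at h245
  rw [e3, s3] at h145
  rw [e4, s4] at h235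
  push_cast at h135 h245 h145 h235
  linarith [h135.1, h245.1, h145.2, h235.2]
end

section
/- Let n ≥ 2 and let σ ∈ S_n be an n-cycle. Set j_k = σ^{k−1}(1) for k = 1, …, n and define, in ℤ^{ℤ/nℤ}, the partial sums d_k = ∑_{ℓ=1}^{k} (e_{j_ℓ} − e_{j_ℓ + 1}) for k = 1, …, n, where j_ℓ + 1 is computed modulo n. Then d_n = 0 and the vectors d_1, …, d_n are pairwise distinct. -/
theorem stmt_8 (n : ℕ) [NeZero n] (hn : 2 ≤ n) (σ : Equiv.Perm (ZMod n))
    (hσ : σ.IsCycle ∧ σ.support.card = n)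
    (j : ℕ → ZMod n) (hj : ∀ k : ℕ, j k = (σ ^ (k - 1)) 1)
    (d : ℕ → ZMod n → ℤ)
    (hd : ∀ k : ℕ, d k = ∑ ℓ ∈ Finset.Icc 1 k,
      ((Pi.single (j ℓ) 1 : ZMod n → ℤ) - (Pi.single (j ℓ + 1) 1 : ZMod n → ℤ))) :
    d n = 0 ∧ ∀ k ∈ Finset.Icc 1 n, ∀ k' ∈ Finset.Icc 1 n, d k = d k' → k = k' := by
  obtain ⟨hc, hcard⟩ := hσ
  have hcardZ : Fintype.card (ZMod n) = n := ZMod.card n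
  have hsupp : σ.support = Finset.univ := Finset.eq_univ_of_card _ (by rw [hcard, hcardZ])
  have h1 : σ 1 ≠ 1 := by
    have : (1 : ZMod n) ∈ σ.support := by rw [hsupp]; exact Finset.mem_univ _
    exact Equiv.Perm.mem_support.mp this
  have horder : orderOf σ = n := by rw [hc.orderOf, hcard]
  have hinj : ∀ a b : ℕ, a < n → b < n → (σ ^ a) 1 = (σ ^ b) 1 → a = b := by
    have key : ∀ a b : ℕ, a ≤ b → a < n → b < n → (σ ^ a) 1 = (σ ^ b) 1 → a = b := by
      intro a b hle ha hb hab
      have hsplit : σ ^ b = σ ^ a * σ ^ (b - a) := by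
        rw [← pow_add]; congr 1; omega
      have h2 : (σ ^ (b - a)) 1 = 1 := by
        have := hab
        rw [hsplit] at this
        simpa using ((σ ^ a).injective (by simpa using this.symm))
      have h3 : σ ^ (b - a) = 1 := (hc.pow_eq_one_iff' h1).mpr h2
      have h4 : n ∣ b - a := by rw [← horder]; exact orderOf_dvd_of_pow_eq_one h3
      have h5 : b - a = 0 := if h : b - a = 0 then h else Nat.eq_zero_of_dvd_of_lt h4 (by omega)
      omega
    intro a b ha hb hab
    rcases le_total a b with h | h
    · exact key a b h ha hb hab
    · exact (key b a h hb ha hab.symm).symm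
  have jinj : ∀ a ∈ Finset.Icc 1 n, ∀ b ∈ Finset.Icc 1 n, j a = j b → a = b := by
    intro a ha b hb hab
    simp only [Finset.mem_Icc] at ha hb
    rw [hj a, hj b] at hab
    have := hinj (a - 1) (b - 1) (by omega) (by omega) hab
    omega
  set S : ℕ → Finset (ZMod n) := fun k => (Finset.Icc 1 k).image j with hS
  have hformula : ∀ k ≤ n, ∀ x : ZMod n,
      d k x = (if x ∈ S k then (1:ℤ) else 0) - (if x - 1 ∈ S k then (1:ℤ) else 0) := by
    intro k hk x
    have hsub : Finset.Icc 1 k ⊆ Finset.Icc 1 n := Finset.Icc_subset_Icc le_rfl hk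
    have jinjk : Set.InjOn j (Finset.Icc 1 k) := fun a ha b hb hab =>
      jinj a (hsub ha) b (hsub hb) hab
    rw [hd k]
    rw [Finset.sum_apply]
    simp only [Pi.sub_apply, Pi.single_apply]
    rw [Finset.sum_sub_distrib]
    congr 1
    · rw [← Finset.sum_image (f := fun y => if x = y then (1:ℤ) else 0)
        (fun a ha b hb h => jinjk ha hb h)]
      exact Finset.sum_ite_eq (S k) x (fun _ => (1:ℤ))
    · have : ∀ ℓ, (if x = j ℓ + 1 then (1:ℤ) else 0) = (if x - 1 = j ℓ then (1:ℤ) else 0) := by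
        intro ℓ
        congr 1
        simp only [eq_iff_iff, sub_eq_iff_eq_add]
      simp_rw [this]
      rw [← Finset.sum_image (f := fun y => if x - 1 = y then (1:ℤ) else 0)
        (fun a ha b hb h => jinjk ha hb h)]
      exact Finset.sum_ite_eq (S k) (x - 1) (fun _ => (1:ℤ))
  have hScard : ∀ k ≤ n, (S k).card = k := by
    intro k hk
    have hsub : Finset.Icc 1 k ⊆ Finset.Icc 1 n := Finset.Icc_subset_Icc le_rfl hk
    rw [hS]
    rw [Finset.card_image_of_injOn (fun a ha b hb h => jinj a (hsub ha) b (hsub hb) h)]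
    simp [Nat.card_Icc]
  constructor
  · have hSn : S n = Finset.univ :=
      Finset.eq_univ_of_card _ (by rw [hScard n le_rfl, hcardZ])
    funext x
    rw [hformula n le_rfl x, hSn]
    simp
  · have key : ∀ k ∈ Finset.Icc 1 n, ∀ k' ∈ Finset.Icc 1 n, k < k' → d k ≠ d k' := by
      intro k hk k' hk' hlt hdd
      simp only [Finset.mem_Icc] at hk hk'
      have hsub : S k ⊆ S k' :=
        Finset.image_subset_image (Finset.Icc_subset_Icc le_rfl hlt.le)
      have hnot : ¬ S k' ⊆ S k := by
        intro h
        have := Finset.card_le_card h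
        rw [hScard k hk.2, hScard k' hk'.2] at this
        omega
      obtain ⟨y, hy1, hy2⟩ := Finset.not_subset.mp hnot
      have step : ∀ x : ZMod n, x ∈ S k' → x ∉ S k → (x + 1 ∈ S k' ∧ x + 1 ∉ S k) := by
        intro x hx1 hx2
        have h := congrFun hdd (x + 1)
        rw [hformula k hk.2, hformula k' hk'.2] at h
        simp only [add_sub_cancel_right] at h
        rw [if_pos hx1, if_neg hx2] at h
        constructor
        · by_contra hc1
          rw [if_neg hc1] at h
          split_ifs at h <;> omega
        · by_contra hc1
          rw [if_pos hc1] at h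
          split_ifs at h <;> omega
      have iter : ∀ m : ℕ, (y + m ∈ S k' ∧ y + m ∉ S k) := by
        intro m
        induction m with
        | zero => simpa using ⟨hy1, hy2⟩
        | succ m ih =>
          have := step (y + m) ih.1 ih.2
          simpa [add_assoc] using this
      have hall : ∀ z : ZMod n, z ∉ S k := by
        intro z
        have := (iter ((z - y).val)).2
        rwa [ZMod.natCast_val, ZMod.cast_id, add_sub_cancel] at this
      exact hall (j k) (Finset.mem_image_of_mem j (Finset.mem_Icc.mpr ⟨hk.1, le_rfl⟩))
    intro k hk k' hk' hdd
    rcases lt_trichotomy k k' with h | h | h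
    · exact absurd hdd (key k hk k' hk' h)
    · exact h
    · exact absurd hdd.symm (key k' hk' k hk h)
end

section
/- Let n ≥ 2 and let (j_1, …, j_m) be a sequence in ℤ/nℤ in which every residue class appears exactly ρ ≥ 1 times (so m = ρn). The partial sums d_k = ∑_{ℓ=1}^{k}(e_{j_ℓ} − e_{j_ℓ+1}) ∈ ℤ^{ℤ/nℤ}, for k = 1, …, m, are pairwise distinct if and only if for every 1 ≤ ρ′ ≤ ρ − 1 no set of ρ′n cyclically consecutive entries of (j_1, …, j_m) contains every residue class of ℤ/nℤ exactly ρ′ times. -/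
theorem stmt_11 (n : ℕ) (hn : 2 ≤ n) (ρ : ℕ) (hρ : 1 ≤ ρ)
    (j : ℕ → ZMod n)
    (hj : ∀ i : ZMod n, ((Finset.Icc 1 (ρ * n)).filter (fun ℓ => j ℓ = i)).card = ρ)
    (d : ℕ → ZMod n → ℤ)
    (hd : ∀ k : ℕ, d k = ∑ ℓ ∈ Finset.Icc 1 k,
      ((Pi.single (j ℓ) 1 : ZMod n → ℤ) - (Pi.single (j ℓ + 1) 1 : ZMod n → ℤ))) :
    (∀ k ∈ Finset.Icc 1 (ρ * n), ∀ k' ∈ Finset.Icc 1 (ρ * n), d k = d k' → k = k') ↔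
    (∀ ρ' : ℕ, 1 ≤ ρ' → ρ' ≤ ρ - 1 → ∀ k : ℕ,
      ¬∀ i : ZMod n,
        ((Finset.range (ρ' * n)).filter
          (fun t => j ((k + t) % (ρ * n) + 1) = i)).card = ρ') := by
  classical
  haveI : NeZero n := ⟨by omega⟩
  set m := ρ * n with hmdef
  have hm0 : 0 < m := Nat.mul_pos (by omega) (by omega)
  have hnm : n ≤ m := by
    calc n = 1 * n := (one_mul n).symm
    _ ≤ ρ * n := Nat.mul_le_mul_right n hρ
  set S : ℕ → ℕ → ZMod n → ℕ :=
    fun a b i => ∑ ℓ ∈ Finset.Ioc a b, if j ℓ = i then 1 else 0 with hSdef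
  have Ssum : ∀ a b i, S a b i
      = ∑ t ∈ Finset.range (b - a), (if j (a + 1 + t) = i then 1 else 0) := by
    intro a b i
    rw [hSdef]
    simp only
    rw [← Finset.Icc_add_one_left_eq_Ioc, ← Finset.Ico_add_one_right_eq_Icc, Finset.sum_Ico_eq_sum_range]
    have : b + 1 - (a + 1) = b - a := by omega
    rw [this]
  -- d in terms of S
  have hdi : ∀ k i, d k i = (S 0 k i : ℤ) - (S 0 k (i - 1) : ℤ) := by
    intro k i
    have h0 : Finset.Ioc 0 k = Finset.Icc 1 k := (Finset.Icc_add_one_left_eq_Ioc 0 k)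
    rw [hd, Finset.sum_apply]
    simp only [Pi.sub_apply, Pi.single_apply]
    rw [Finset.sum_sub_distrib, hSdef]
    simp only [h0]
    push_cast
    congr 1
    · apply Finset.sum_congr rfl
      intro ℓ _
      by_cases h : i = j ℓ
      · rw [if_pos h, if_pos h.symm]
      · rw [if_neg h, if_neg (fun hc => h hc.symm)]
    · apply Finset.sum_congr rfl
      intro ℓ _
      have hiff : (i = j ℓ + 1) ↔ (j ℓ = i - 1) := by
        constructor
        · intro h; rw [h]; ring
        · intro h; rw [h]; ring
      by_cases h : i = j ℓ + 1
      · rw [if_pos h, if_pos (hiff.mp h)]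
      · rw [if_neg h, if_neg (fun hc => h (hiff.mpr hc))]
  have Sadd : ∀ a b c i, a ≤ b → b ≤ c → S a c i = S a b i + S b c i := by
    intro a b c i hab hbc
    exact (Finset.sum_Ioc_consecutive _ hab hbc).symm
  have Stot : ∀ i, S 0 m i = ρ := by
    intro i
    have h0 : Finset.Ioc 0 m = Finset.Icc 1 m := (Finset.Icc_add_one_left_eq_Ioc 0 m)
    rw [hSdef]
    simp only [h0]
    rw [← Finset.card_filter]
    exact hj i
  have Ssumtot : ∀ a b, a ≤ b → ∑ i : ZMod n, S a b i = b - a := by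
    intro a b _
    rw [hSdef]
    simp only
    rw [Finset.sum_comm]
    have h1 : ∀ ℓ ∈ Finset.Ioc a b, (∑ i : ZMod n, if j ℓ = i then 1 else 0) = 1 := by
      intro ℓ _; simp
    rw [Finset.sum_congr rfl h1, Finset.sum_const, Nat.card_Ioc, smul_eq_mul, mul_one]
  have hconst : ∀ a b, (∀ i, S a b i = S a b (i - 1)) → ∀ i, S a b i = S a b 0 := by
    intro a b h
    have key : ∀ t : ℕ, ∀ i : ZMod n, S a b (i - (t : ZMod n)) = S a b i := by
      intro t
      induction t with
      | zero => intro i; simp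
      | succ t ih =>
        intro i
        have e : i - ((t : ℕ) + 1 : ZMod n) = (i - 1) - (t : ZMod n) := by ring
        have : ((t + 1 : ℕ) : ZMod n) = ((t : ℕ) : ZMod n) + 1 := by push_cast; ring
        rw [this, e, ih (i - 1), ← h i]
    intro i
    have := key i.val i
    rw [ZMod.natCast_rightInverse i, sub_self] at this
    exact this.symm
  have hdeq : ∀ a b, a ≤ b → (d a = d b ↔ ∀ i, S a b i = S a b (i - 1)) := by
    intro a b hab
    constructor
    · intro h i
      have h1 : d a i = d b i := congrFun h i
      rw [hdi a i, hdi b i] at h1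
      have h3 : S 0 b i = S 0 a i + S a b i := Sadd 0 a b i (Nat.zero_le _) hab
      have h4 : S 0 b (i - 1) = S 0 a (i - 1) + S a b (i - 1) :=
        Sadd 0 a b (i - 1) (Nat.zero_le _) hab
      have h3' : (S 0 b i : ℤ) = (S 0 a i : ℤ) + (S a b i : ℤ) := by exact_mod_cast h3
      have h4' : (S 0 b (i - 1) : ℤ) = (S 0 a (i - 1) : ℤ) + (S a b (i - 1) : ℤ) := by
        exact_mod_cast h4
      have : (S a b i : ℤ) = S a b (i - 1) := by linarith
      exact_mod_cast this
    · intro h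
      funext i
      rw [hdi a i, hdi b i]
      have h3 : S 0 b i = S 0 a i + S a b i := Sadd 0 a b i (Nat.zero_le _) hab
      have h4 : S 0 b (i - 1) = S 0 a (i - 1) + S a b (i - 1) :=
        Sadd 0 a b (i - 1) (Nat.zero_le _) hab
      have h5 := h i
      push_cast [h3, h4, h5]
      ring
  -- window lemmas
  have Wnowrap : ∀ k L i, k + L ≤ m →
      (∑ t ∈ Finset.range L, if j ((k + t) % m + 1) = i then 1 else 0) = S k (k + L) i := by
    intro k L i hkl
    rw [Ssum]
    have hL : k + L - k = L := by omega
    rw [hL]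
    apply Finset.sum_congr rfl
    intro t ht
    rw [Finset.mem_range] at ht
    have h1 : (k + t) % m = k + t := Nat.mod_eq_of_lt (by omega)
    have h2 : k + t + 1 = k + 1 + t := by omega
    rw [h1, h2]
  have Wwrap : ∀ k L i, k < m → m < k + L → L ≤ m →
      (∑ t ∈ Finset.range L, if j ((k + t) % m + 1) = i then 1 else 0)
        = S k m i + S 0 (k + L - m) i := by
    intro k L i hk hkl hLm
    have h1 : m - k ≤ L := by omega
    rw [Finset.range_eq_Ico, ← Finset.sum_Ico_consecutive _ (Nat.zero_le (m - k)) h1]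
    congr 1
    · rw [← Finset.range_eq_Ico, Ssum]
      apply Finset.sum_congr rfl
      intro t ht
      rw [Finset.mem_range] at ht
      have h2 : (k + t) % m = k + t := Nat.mod_eq_of_lt (by omega)
      have h3 : k + t + 1 = k + 1 + t := by omega
      rw [h2, h3]
    · rw [Finset.sum_Ico_eq_sum_range, Ssum]
      have e0 : L - (m - k) = k + L - m - 0 := by omega
      apply Finset.sum_congr (by rw [e0])
      intro s hs
      rw [Finset.mem_range] at hs
      have h2 : (k + (m - k + s)) % m = s := by
        have e1 : k + (m - k + s) = m + s := by omega
        rw [e1, Nat.add_mod_left]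
        exact Nat.mod_eq_of_lt (by omega)
      rw [h2]
      have h3 : s + 1 = 0 + 1 + s := by omega
      rw [h3]
  constructor
  · -- injectivity → no balanced window
    intro hinj ρ' h1 h2 k hbal
    set L := ρ' * n with hLdef
    have hL1 : 1 ≤ L := Nat.mul_pos (by omega) (by omega)
    have hLm : L < m := by
      have e1 : ρ' * n ≤ (ρ - 1) * n := Nat.mul_le_mul_right n h2
      have e2 : (ρ - 1) * n = ρ * n - n := by rw [Nat.sub_mul, one_mul]
      omega
    set k₀ := k % m with hk₀def
    have hk₀ : k₀ < m := Nat.mod_lt _ hm0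
    have hbal' : ∀ i,
        (∑ t ∈ Finset.range L, if j ((k₀ + t) % m + 1) = i then 1 else 0) = ρ' := by
      intro i
      have hb := hbal i
      rw [Finset.card_filter] at hb
      rw [← hb]
      apply Finset.sum_congr rfl
      intro t _
      rw [hk₀def, Nat.mod_add_mod]
    by_cases hcase : k₀ + L ≤ m
    · have hSb : ∀ i, S k₀ (k₀ + L) i = ρ' := by
        intro i
        rw [← Wnowrap k₀ L i hcase]
        exact hbal' i
      by_cases hk0 : k₀ = 0
      · have hSb' : ∀ i, S 0 L i = ρ' := by
          intro i
          have := hSb i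
          rw [hk0] at this
          simpa using this
        have hS2 : ∀ i, S L m i = ρ - ρ' := by
          intro i
          have t1 : S 0 m i = S 0 L i + S L m i := Sadd 0 L m i (Nat.zero_le _) (le_of_lt hLm)
          have t2 := Stot i
          have t3 := hSb' i
          omega
        have hdLm : d L = d m := by
          rw [hdeq L m (le_of_lt hLm)]
          intro i
          rw [hS2 i, hS2 (i - 1)]
        have := hinj L (Finset.mem_Icc.mpr ⟨hL1, le_of_lt hLm⟩) m
          (Finset.mem_Icc.mpr ⟨hm0, le_refl m⟩) hdLm
        omega
      · have hd2 : d k₀ = d (k₀ + L) := by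
          rw [hdeq k₀ (k₀ + L) (Nat.le_add_right _ _)]
          intro i
          rw [hSb i, hSb (i - 1)]
        have := hinj k₀ (Finset.mem_Icc.mpr ⟨by omega, by omega⟩) (k₀ + L)
          (Finset.mem_Icc.mpr ⟨by omega, hcase⟩) hd2
        omega
    · push_neg at hcase
      have hw : ∀ i, S k₀ m i + S 0 (k₀ + L - m) i = ρ' := by
        intro i
        rw [← Wwrap k₀ L i hk₀ hcase (le_of_lt hLm)]
        exact hbal' i
      set a := k₀ + L - m with hadef
      have ha1 : 1 ≤ a := by omega
      have ha2 : a < k₀ := by omega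
      have hmid : ∀ i, S a k₀ i = ρ - ρ' := by
        intro i
        have t1 : S 0 m i = S 0 a i + S a m i := Sadd 0 a m i (Nat.zero_le _) (by omega)
        have t2 : S a m i = S a k₀ i + S k₀ m i := Sadd a k₀ m i (le_of_lt ha2) (le_of_lt hk₀)
        have t3 := Stot i
        have t4 := hw i
        omega
      have hda : d a = d k₀ := by
        rw [hdeq a k₀ (le_of_lt ha2)]
        intro i
        rw [hmid i, hmid (i - 1)]
      have := hinj a (Finset.mem_Icc.mpr ⟨ha1, by omega⟩) k₀
        (Finset.mem_Icc.mpr ⟨by omega, by omega⟩) hda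
      omega
  · -- no balanced window → injectivity
    intro hwin k hk k' hk' hdd
    rw [Finset.mem_Icc] at hk hk'
    by_contra hne
    have main : ∀ a b, 1 ≤ a → a < b → b ≤ m → d a = d b → False := by
      intro a b ha hab hbm hde
      have hS := (hdeq a b (le_of_lt hab)).mp hde
      have hc := hconst a b hS
      set c := S a b 0 with hcdef
      have htot : ∑ i : ZMod n, S a b i = b - a := Ssumtot a b (le_of_lt hab)
      have htot2 : ∑ i : ZMod n, S a b i = n * c := by
        rw [Finset.sum_congr rfl (fun i _ => hc i), Finset.sum_const, Finset.card_univ,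
          ZMod.card, smul_eq_mul]
      have hcn : n * c = b - a := by omega
      have hc1 : 1 ≤ c := by
        rcases Nat.eq_zero_or_pos c with h | h
        · rw [h, mul_zero] at hcn; omega
        · exact h
      have hcρ : c ≤ ρ - 1 := by
        have e1 : n * c < n * ρ := by
          have e4 : ρ * n = n * ρ := Nat.mul_comm ρ n
          omega
        have := Nat.lt_of_mul_lt_mul_left e1
        omega
      apply hwin c hc1 hcρ a
      intro i
      rw [Finset.card_filter]
      have hab' : a + c * n ≤ m := by
        have e2 : c * n = b - a := by rw [mul_comm]; exact hcn
        omega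
      rw [Wnowrap a (c * n) i hab']
      have e3 : a + c * n = b := by
        have e2 : c * n = b - a := by rw [mul_comm]; exact hcn
        omega
      rw [e3]
      exact hc i
    rcases lt_or_gt_of_ne hne with h | h
    · exact (main k k' hk.1 h hk'.2 hdd).elim
    · exact (main k' k hk'.1 h hk.2 hdd.symm).elim
end

section
/- Fix r ≥ 2. Consider the open unit cube (0,1)^{r−1} with coordinates x_1, …, x_{r−1}, and remove from it all points lying on some hyperplane of the form ∑_{i=a}^{b} x_i = c with 1 ≤ a ≤ b ≤ r−1 and c ∈ ℤ. Then the complement has exactly (r−1)! connected components. -/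
open Finset

namespace Stmt12

variable {n : ℕ}

/-- Extend a `Fin n`-tuple by zero. -/
noncomputable def ext' (x : Fin n → ℝ) (i : ℕ) : ℝ := if h : i < n then x ⟨i, h⟩ else 0

/-- Prefix sums. -/
noncomputable def psum (x : Fin n → ℝ) (m : ℕ) : ℝ := ∑ i ∈ Finset.range m, ext' x i

/-- Shifted tuple: `tP t (m+1) = t m`, `tP t 0 = 0`. -/
noncomputable def tP (t : Fin n → ℝ) (m : ℕ) : ℝ := if m = 0 then 0 else ext' t (m - 1)

noncomputable def F (x : Fin n → ℝ) : Fin n → ℝ := fun k => Int.fract (psum x ((k : ℕ) + 1))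

noncomputable def G (t : Fin n → ℝ) : Fin n → ℝ :=
  fun k => Int.fract (tP t ((k : ℕ) + 1) - tP t (k : ℕ))

def S (n : ℕ) : Set (Fin n → ℝ) :=
  {x | (∀ i, 0 < x i ∧ x i < 1) ∧
    ¬∃ a b : Fin n, a ≤ b ∧ ∃ c : ℤ, (∑ i ∈ Finset.Icc a b, x i) = (c : ℝ)}

def T (n : ℕ) : Set (Fin n → ℝ) := {t | (∀ i, 0 < t i ∧ t i < 1) ∧ Function.Injective t}

lemma tP_succ (t : Fin n → ℝ) (k : Fin n) : tP t ((k : ℕ) + 1) = t k := by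
  simp [tP, ext', k.isLt]

lemma nonInt_Ioo {a : ℝ} (h0 : 0 < a) (h1 : a < 1) (c : ℤ) : a ≠ (c : ℝ) := by
  intro h
  rw [h] at h0 h1
  have h0' : (0 : ℤ) < c := by exact_mod_cast h0
  have h1' : c < 1 := by exact_mod_cast h1
  omega

lemma nonInt_sub {a b : ℝ} (ha0 : 0 < a) (ha1 : a < 1) (hb0 : 0 < b) (hb1 : b < 1)
    (hne : a ≠ b) (c : ℤ) : a - b ≠ (c : ℝ) := by
  intro h
  have h1 : (-1 : ℝ) < c := by rw [← h]; linarith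
  have h2 : (c : ℝ) < 1 := by rw [← h]; linarith
  have h1' : (-1 : ℤ) < c := by exact_mod_cast h1
  have h2' : c < 1 := by exact_mod_cast h2
  have : c = 0 := by omega
  rw [this] at h
  apply hne
  push_cast at h
  linarith

lemma fract_mem_Ioo {a : ℝ} (h : ∀ c : ℤ, a ≠ (c : ℝ)) :
    0 < Int.fract a ∧ Int.fract a < 1 := by
  refine ⟨lt_of_le_of_ne (Int.fract_nonneg a) ?_, Int.fract_lt_one a⟩
  intro h0
  have : a - (⌊a⌋ : ℝ) = 0 := by rw [Int.self_sub_floor, ← h0]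
  exact h ⌊a⌋ (by linarith)

lemma ne_floor_of_nonInt {a : ℝ} (h : ∀ c : ℤ, a ≠ (c : ℝ)) : a ≠ (⌊a⌋ : ℝ) := h ⌊a⌋

/-- The sum over a `Fin` interval equals a difference of prefix sums. -/
lemma sum_Icc_eq (x : Fin n → ℝ) {a b : Fin n} (hab : a ≤ b) :
    ∑ i ∈ Finset.Icc a b, x i = psum x ((b : ℕ) + 1) - psum x (a : ℕ) := by
  have h1 : ∑ i ∈ Finset.Icc (a : ℕ) (b : ℕ), ext' x i = ∑ i ∈ Finset.Icc a b, x i := by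
    rw [← Fin.map_valEmbedding_Icc, Finset.sum_map]
    refine Finset.sum_congr rfl fun i _ => ?_
    simp [ext', i.isLt]
  have h2 := Finset.sum_Ico_eq_sub (ext' x)
    (show (a : ℕ) ≤ (b : ℕ) + 1 from Nat.le_succ_of_le hab)
  rw [Finset.Ico_add_one_right_eq_Icc, h1] at h2
  exact h2

/-- Membership in `S` reformulated via prefix sums. -/
lemma mem_S_iff (x : Fin n → ℝ) :
    x ∈ S n ↔ (∀ i, 0 < x i ∧ x i < 1) ∧
      ∀ a b : Fin n, a ≤ b → ∀ c : ℤ, psum x ((b : ℕ) + 1) - psum x (a : ℕ) ≠ (c : ℝ) := by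
  constructor
  · rintro ⟨h1, h2⟩
    refine ⟨h1, fun a b hab c h => h2 ⟨a, b, hab, c, ?_⟩⟩
    rw [sum_Icc_eq x hab, h]
  · rintro ⟨h1, h2⟩
    refine ⟨h1, ?_⟩
    rintro ⟨a, b, hab, c, hc⟩
    exact h2 a b hab c (by rw [← sum_Icc_eq x hab, hc])

lemma psum_nonInt {x : Fin n → ℝ} (hx : x ∈ S n) (k : Fin n) (c : ℤ) :
    psum x ((k : ℕ) + 1) ≠ (c : ℝ) := by
  rw [mem_S_iff] at hx
  have h := hx.2 ⟨0, k.pos⟩ k (by simp [Fin.le_def]) c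
  simpa [psum] using h

lemma F_ne_aux {x : Fin n → ℝ} (hx : x ∈ S n) {j k : Fin n} (h : (j : ℕ) < (k : ℕ))
    (heq : F x j = F x k) : False := by
  obtain ⟨z, hz⟩ := Int.fract_eq_fract.1 heq
  have hjk' : (j : ℕ) + 1 ≤ (k : ℕ) := h
  set a : Fin n := ⟨(j : ℕ) + 1, lt_of_le_of_lt hjk' k.isLt⟩ with ha
  rw [mem_S_iff] at hx
  refine hx.2 a k (show a ≤ k from Fin.le_def.2 hjk') (-z) ?_
  have : (a : ℕ) = (j : ℕ) + 1 := rfl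
  rw [this]
  push_cast
  linarith

lemma F_mem_T {x : Fin n → ℝ} (hx : x ∈ S n) : F x ∈ T n := by
  constructor
  · intro k
    exact fract_mem_Ioo (psum_nonInt hx k)
  · intro j k hjk
    by_contra hne
    rcases lt_or_gt_of_ne (fun h : (j : ℕ) = (k : ℕ) => hne (Fin.ext h)) with h | h
    · exact F_ne_aux hx h hjk
    · exact F_ne_aux hx h hjk.symm

lemma d_nonInt {t : Fin n → ℝ} (ht : t ∈ T n) (k : Fin n) (c : ℤ) :
    tP t ((k : ℕ) + 1) - tP t (k : ℕ) ≠ (c : ℝ) := by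
  rw [tP_succ]
  by_cases h0 : (k : ℕ) = 0
  · rw [tP, if_pos h0, sub_zero]
    exact nonInt_Ioo (ht.1 k).1 (ht.1 k).2 c
  · have hlt : (k : ℕ) - 1 < n := lt_trans (Nat.pred_lt h0) k.isLt
    have : tP t (k : ℕ) = t ⟨(k : ℕ) - 1, hlt⟩ := by
      rw [tP, if_neg h0, ext', dif_pos hlt]
    rw [this]
    set j : Fin n := ⟨(k : ℕ) - 1, hlt⟩
    have hne : t k ≠ t j := by
      intro h
      have := ht.2 h
      have : (k : ℕ) = (j : ℕ) := congrArg Fin.val this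
      simp only [j] at this
      omega
    exact nonInt_sub (ht.1 k).1 (ht.1 k).2 (ht.1 j).1 (ht.1 j).2 hne c

lemma fract_sum_shift (f : ℕ → ℝ) (s : Finset ℕ) :
    ∃ z : ℤ, ∑ i ∈ s, Int.fract (f i) = (∑ i ∈ s, f i) + (z : ℝ) := by
  refine ⟨-∑ i ∈ s, ⌊f i⌋, ?_⟩
  have : ∀ i, Int.fract (f i) = f i - (⌊f i⌋ : ℝ) := fun i => (Int.self_sub_floor (f i)).symm
  rw [Finset.sum_congr rfl fun i _ => this i, Finset.sum_sub_distrib]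
  push_cast
  ring

lemma psum_G (t : Fin n → ℝ) {m : ℕ} (hm : m ≤ n) :
    ∃ z : ℤ, psum (G t) m = tP t m + (z : ℝ) := by
  have h1 : psum (G t) m = ∑ i ∈ Finset.range m, Int.fract (tP t (i + 1) - tP t i) := by
    refine Finset.sum_congr rfl fun i hi => ?_
    have hin : i < n := lt_of_lt_of_le (Finset.mem_range.1 hi) hm
    show ext' (G t) i = _
    rw [ext', dif_pos hin]
    rfl
  obtain ⟨z, hz⟩ := fract_sum_shift (fun i => tP t (i + 1) - tP t i) (Finset.range m)
  refine ⟨z, ?_⟩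
  rw [h1, hz, Finset.sum_range_sub (tP t)]
  have : tP t 0 = 0 := rfl
  rw [this]
  ring

lemma G_mem_S {t : Fin n → ℝ} (ht : t ∈ T n) : G t ∈ S n := by
  rw [mem_S_iff]
  constructor
  · intro k
    exact fract_mem_Ioo (d_nonInt ht k)
  · intro a b hab c hc
    obtain ⟨z1, hz1⟩ := psum_G t (show (b : ℕ) + 1 ≤ n from b.isLt)
    obtain ⟨z2, hz2⟩ := psum_G t (show (a : ℕ) ≤ n from le_of_lt a.isLt)
    rw [hz1, hz2, tP_succ] at hc
    by_cases h0 : (a : ℕ) = 0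
    · rw [tP, if_pos h0] at hc
      exact nonInt_Ioo (ht.1 b).1 (ht.1 b).2 (c - z1 + z2) (by push_cast; linarith)
    · have hlt : (a : ℕ) - 1 < n := lt_trans (Nat.pred_lt h0) a.isLt
      have he : tP t (a : ℕ) = t ⟨(a : ℕ) - 1, hlt⟩ := by
        rw [tP, if_neg h0, ext', dif_pos hlt]
      rw [he] at hc
      set j : Fin n := ⟨(a : ℕ) - 1, hlt⟩
      have hne : t b ≠ t j := by
        intro h
        have : (b : ℕ) = (j : ℕ) := congrArg Fin.val (ht.2 h)
        simp only [j] at this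
        have hab' : (a : ℕ) ≤ (b : ℕ) := hab
        omega
      exact nonInt_sub (ht.1 b).1 (ht.1 b).2 (ht.1 j).1 (ht.1 j).2 hne (c - z1 + z2)
        (by push_cast; linarith)

lemma fract_fract_sub (A B : ℝ) :
    Int.fract (Int.fract A - Int.fract B) = Int.fract (A - B) := by
  have h : Int.fract A - Int.fract B = (A - B) - ((⌊A⌋ - ⌊B⌋ : ℤ) : ℝ) := by
    rw [← Int.self_sub_floor, ← Int.self_sub_floor]
    push_cast
    ring
  rw [h, Int.fract_sub_intCast]

lemma G_F {x : Fin n → ℝ} (hx : x ∈ S n) : G (F x) = x := by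
  funext k
  have h1 : tP (F x) ((k : ℕ) + 1) = Int.fract (psum x ((k : ℕ) + 1)) := tP_succ (F x) k
  have h2 : tP (F x) (k : ℕ) = Int.fract (psum x (k : ℕ)) := by
    by_cases h0 : (k : ℕ) = 0
    · rw [tP, if_pos h0, h0]
      have : psum x 0 = 0 := rfl
      rw [this, Int.fract_zero]
    · have hlt : (k : ℕ) - 1 < n := lt_trans (Nat.pred_lt h0) k.isLt
      rw [tP, if_neg h0, ext', dif_pos hlt]
      show Int.fract (psum x (((k : ℕ) - 1) + 1)) = _
      have he : (k : ℕ) - 1 + 1 = (k : ℕ) := Nat.succ_pred_eq_of_pos (Nat.pos_of_ne_zero h0)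
      rw [he]
  have h3 : psum x ((k : ℕ) + 1) - psum x (k : ℕ) = x k := by
    rw [psum, psum, Finset.sum_range_succ]
    have : ext' x (k : ℕ) = x k := by rw [ext', dif_pos k.isLt]
    rw [this]
    ring
  show Int.fract (tP (F x) ((k : ℕ) + 1) - tP (F x) (k : ℕ)) = x k
  rw [h1, h2, fract_fract_sub, h3]
  exact Int.fract_eq_self.2 ⟨le_of_lt (hx.1 k).1, (hx.1 k).2⟩

lemma F_G {t : Fin n → ℝ} (ht : t ∈ T n) : F (G t) = t := by
  funext k
  obtain ⟨z, hz⟩ := psum_G t (show (k : ℕ) + 1 ≤ n from k.isLt)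
  show Int.fract (psum (G t) ((k : ℕ) + 1)) = t k
  rw [hz, tP_succ, Int.fract_add_intCast]
  exact Int.fract_eq_self.2 ⟨le_of_lt (ht.1 k).1, (ht.1 k).2⟩

section Topology

lemma cont_ext' (i : ℕ) : Continuous fun x : Fin n → ℝ => ext' x i := by
  by_cases h : i < n
  · simpa [ext', h] using continuous_apply (⟨i, h⟩ : Fin n)
  · simp only [ext', h, dif_neg, not_false_iff]
    exact continuous_const

lemma cont_psum (m : ℕ) : Continuous fun x : Fin n → ℝ => psum x m := by
  unfold psum
  exact continuous_finset_sum _ fun i _ => cont_ext' i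

lemma cont_tP (m : ℕ) : Continuous fun t : Fin n → ℝ => tP t m := by
  unfold tP
  by_cases h : m = 0
  · simp only [h, if_pos]
    exact continuous_const
  · simp only [h, if_neg, ite_false]
    exact cont_ext' (m - 1)

noncomputable def Phi : (S n) → (T n) := fun x => ⟨F x.1, F_mem_T x.2⟩

noncomputable def Psi : (T n) → (S n) := fun t => ⟨G t.1, G_mem_S t.2⟩

lemma cont_Phi : Continuous (Phi (n := n)) := by
  apply Continuous.subtype_mk
  rw [continuous_iff_continuousAt]
  rintro ⟨x, hx⟩
  have hF : ContinuousAt (F (n := n)) x := by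
    apply continuousAt_pi.2
    intro k
    have h : ContinuousAt (Int.fract ∘ fun y : Fin n → ℝ => psum y ((k : ℕ) + 1)) x :=
      ContinuousAt.comp (continuousAt_fract (ne_floor_of_nonInt (psum_nonInt hx k)))
        (cont_psum ((k : ℕ) + 1)).continuousAt
    exact h
  exact ContinuousAt.comp (f := Subtype.val) (x := (⟨x, hx⟩ : S n)) hF continuousAt_subtype_val

lemma cont_Psi : Continuous (Psi (n := n)) := by
  apply Continuous.subtype_mk
  rw [continuous_iff_continuousAt]
  rintro ⟨t, ht⟩
  have hG : ContinuousAt (G (n := n)) t := by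
    apply continuousAt_pi.2
    intro k
    have h : ContinuousAt
        (Int.fract ∘ fun y : Fin n → ℝ => tP y ((k : ℕ) + 1) - tP y (k : ℕ)) t :=
      ContinuousAt.comp (continuousAt_fract (ne_floor_of_nonInt (d_nonInt ht k)))
        ((cont_tP ((k : ℕ) + 1)).sub (cont_tP (k : ℕ))).continuousAt
    exact h
  exact ContinuousAt.comp (f := Subtype.val) (x := (⟨t, ht⟩ : T n)) hG continuousAt_subtype_val

lemma card_transfer :
    Nat.card (ConnectedComponents (S n)) = Nat.card (ConnectedComponents (T n)) := by
  set m1 := cont_Phi (n := n) |>.connectedComponentsMap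
  set m2 := cont_Psi (n := n) |>.connectedComponentsMap
  have hl : Function.LeftInverse m2 m1 := by
    intro c
    obtain ⟨x, rfl⟩ := ConnectedComponents.surjective_coe c
    show ConnectedComponents.mk (Psi (Phi x)) = ConnectedComponents.mk x
    exact congrArg _ (Subtype.ext (G_F x.2))
  have hr : Function.LeftInverse m1 m2 := by
    intro c
    obtain ⟨t, rfl⟩ := ConnectedComponents.surjective_coe c
    show ConnectedComponents.mk (Phi (Psi t)) = ConnectedComponents.mk t
    exact congrArg _ (Subtype.ext (F_G t.2))
  exact Nat.card_eq_of_bijective m1 ⟨hl.injective, hr.surjective⟩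

/-- The chamber associated to a permutation. -/
def Cset (σ : Equiv.Perm (Fin n)) : Set (Fin n → ℝ) := {u | StrictMono (u ∘ σ)}

def Cube (n : ℕ) : Set (Fin n → ℝ) := {u | ∀ i, 0 < u i ∧ u i < 1}

lemma isOpen_Cset (σ : Equiv.Perm (Fin n)) : IsOpen (Cset σ) := by
  have h : Cset σ = ⋂ i, ⋂ j, {u : Fin n → ℝ | i < j → u (σ i) < u (σ j)} := by
    ext u
    simp only [Cset, Set.mem_iInter, Set.mem_setOf_eq]
    exact ⟨fun h i j => fun hij => h hij, fun h i j hij => h i j hij⟩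
  rw [h]
  refine isOpen_iInter_of_finite fun i => isOpen_iInter_of_finite fun j => ?_
  by_cases hij : i < j
  · have : {u : Fin n → ℝ | i < j → u (σ i) < u (σ j)}
        = {u : Fin n → ℝ | u (σ i) < u (σ j)} := by
      ext u; simp [hij]
    rw [this]
    exact isOpen_lt (continuous_apply (σ i)) (continuous_apply (σ j))
  · have : {u : Fin n → ℝ | i < j → u (σ i) < u (σ j)} = Set.univ := by
      ext u; simp [hij]
    rw [this]
    exact isOpen_univ

lemma convex_Cset (σ : Equiv.Perm (Fin n)) : Convex ℝ (Cset σ) := by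
  intro u hu v hv a b ha hb hab
  intro i j hij
  have h1 : u (σ i) < u (σ j) := hu hij
  have h2 : v (σ i) < v (σ j) := hv hij
  simp only [Function.comp_apply, Pi.add_apply, Pi.smul_apply, smul_eq_mul]
  rcases eq_or_lt_of_le ha with h | h
  · have hb1 : b = 1 := by linarith
    rw [← h, hb1]; ring_nf; linarith
  · nlinarith

lemma convex_Cube : Convex ℝ (Cube n) := by
  intro u hu v hv a b ha hb hab
  intro i
  have h1 := hu i
  have h2 := hv i
  simp only [Pi.add_apply, Pi.smul_apply, smul_eq_mul]
  constructor
  · rcases eq_or_lt_of_le ha with h | h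
    · have hb1 : b = 1 := by linarith
      rw [← h, hb1]
      simpa using h2.1
    · have q1 : 0 < a * u i := mul_pos h h1.1
      have q2 : 0 ≤ b * v i := mul_nonneg hb h2.1.le
      linarith
  · rcases eq_or_lt_of_le ha with h | h
    · have hb1 : b = 1 := by linarith
      rw [← h, hb1]
      simpa using h2.2
    · have q1 : a * u i < a := by nlinarith
      have q2 : b * v i ≤ b := by nlinarith
      linarith

lemma cube_cset_subset_T (σ : Equiv.Perm (Fin n)) : Cube n ∩ Cset σ ⊆ T n := by
  rintro u ⟨hc, hm⟩
  refine ⟨hc, ?_⟩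
  have h : Function.Injective ((u ∘ σ) ∘ σ.symm) :=
    (StrictMono.injective hm).comp σ.symm.injective
  have he : (u ∘ σ) ∘ σ.symm = u := by
    funext i; simp
  rwa [he] at h

def D (σ : Equiv.Perm (Fin n)) : Set (T n) := Subtype.val ⁻¹' Cset σ

lemma isOpen_D (σ : Equiv.Perm (Fin n)) : IsOpen (D (n := n) σ) :=
  (isOpen_Cset σ).preimage continuous_subtype_val

lemma preconn_D (σ : Equiv.Perm (Fin n)) : IsPreconnected (D (n := n) σ) := by
  have h1 : IsPreconnected (Cube n ∩ Cset σ) :=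
    (convex_Cube.inter (convex_Cset σ)).isPreconnected
  have h2 : Subtype.val '' (D (n := n) σ) = Cube n ∩ Cset σ := by
    ext u
    constructor
    · rintro ⟨⟨v, hv⟩, hmem, rfl⟩
      exact ⟨hv.1, hmem⟩
    · intro hu
      exact ⟨⟨u, cube_cset_subset_T σ hu⟩, hu.2, rfl⟩
  exact (Topology.IsInducing.subtypeVal.isPreconnected_image).1 (h2 ▸ h1)

lemma D_unique {t : Fin n → ℝ} (ht : Function.Injective t) {σ τ : Equiv.Perm (Fin n)}
    (h1 : StrictMono (t ∘ σ)) (h2 : StrictMono (t ∘ τ)) : σ = τ := by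
  have h := Tuple.unique_monotone h1.monotone h2.monotone
  exact Equiv.ext fun i => ht (congrFun h i)

lemma exists_D {t : Fin n → ℝ} (ht : t ∈ T n) : ∃ σ : Equiv.Perm (Fin n), StrictMono (t ∘ σ) :=
  ⟨Tuple.sort t, (Tuple.monotone_sort t).strictMono_of_injective
    (ht.2.comp (Tuple.sort t).injective)⟩

lemma isClosed_D (σ : Equiv.Perm (Fin n)) : IsClosed (D (n := n) σ) := by
  rw [← isOpen_compl_iff]
  have h : (D (n := n) σ)ᶜ = ⋃ τ : Equiv.Perm (Fin n), ⋃ _ : τ ≠ σ, D (n := n) τ := by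
    ext t
    simp only [Set.mem_compl_iff, Set.mem_iUnion, D, Set.mem_preimage]
    constructor
    · intro hns
      obtain ⟨τ, hτ⟩ := exists_D t.2
      exact ⟨τ, fun he => hns (he ▸ hτ), hτ⟩
    · rintro ⟨τ, hne, hmem⟩ hmem'
      exact hne (D_unique t.2.2 hmem hmem')
  rw [h]
  exact isOpen_iUnion fun τ => isOpen_iUnion fun _ => isOpen_D τ

noncomputable def pt (σ : Equiv.Perm (Fin n)) : Fin n → ℝ :=
  fun i => ((σ.symm i : ℕ) + 1) / (n + 1)

lemma pt_mem (σ : Equiv.Perm (Fin n)) : pt σ ∈ Cube n ∩ Cset σ := by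
  constructor
  · intro i
    constructor
    · show (0 : ℝ) < ((σ.symm i : ℕ) + 1) / (n + 1)
      positivity
    · show ((σ.symm i : ℕ) + 1 : ℝ) / (n + 1) < 1
      rw [div_lt_one (by positivity)]
      have : ((σ.symm i : ℕ) : ℝ) < (n : ℝ) := by exact_mod_cast (σ.symm i).isLt
      linarith
  · intro i j hij
    show ((σ.symm (σ i) : ℕ) + 1 : ℝ) / (n + 1) < ((σ.symm (σ j) : ℕ) + 1) / (n + 1)
    rw [Equiv.symm_apply_apply, Equiv.symm_apply_apply]
    apply div_lt_div_of_pos_right ?_ (by positivity)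
    have : ((i : ℕ) : ℝ) < ((j : ℕ) : ℝ) := by exact_mod_cast hij
    linarith

lemma pt_mem_T (σ : Equiv.Perm (Fin n)) : pt σ ∈ T n :=
  cube_cset_subset_T σ (pt_mem σ)

lemma pt_mem_D (σ : Equiv.Perm (Fin n)) :
    (⟨pt σ, pt_mem_T σ⟩ : T n) ∈ D (n := n) σ := (pt_mem σ).2

lemma card_T_count : Nat.card (ConnectedComponents (T n)) = Nat.factorial n := by
  set e : Equiv.Perm (Fin n) → ConnectedComponents (T n) :=
    fun σ => ConnectedComponents.mk ⟨pt σ, pt_mem_T σ⟩ with he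
  have hbij : Function.Bijective e := by
    constructor
    · intro σ τ h
      have h1 : (⟨pt σ, pt_mem_T σ⟩ : T n) ∈ connectedComponent (⟨pt τ, pt_mem_T τ⟩ : T n) :=
        ConnectedComponents.coe_eq_coe'.1 h
      have h2 : connectedComponent (⟨pt τ, pt_mem_T τ⟩ : T n) ⊆ D (n := n) τ :=
        (IsClopen.connectedComponent_subset ⟨isClosed_D τ, isOpen_D τ⟩ (pt_mem_D τ))
      have h3 : StrictMono (pt σ ∘ τ) := h2 h1
      exact (D_unique (pt_mem_T σ).2 (pt_mem σ).2 h3).symm ▸ rfl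
    · intro c
      obtain ⟨t, rfl⟩ := ConnectedComponents.surjective_coe c
      obtain ⟨σ, hσ⟩ := exists_D t.2
      refine ⟨σ, ?_⟩
      apply ConnectedComponents.coe_eq_coe'.2
      exact (preconn_D σ).subset_connectedComponent (hσ : t ∈ D (n := n) σ) (pt_mem_D σ)
  rw [← Nat.card_eq_of_bijective e hbij]
  simp [Nat.card_eq_fintype_card, Fintype.card_perm]

lemma main_count (n : ℕ) :
    Nat.card (ConnectedComponents (S n)) = Nat.factorial n :=
  card_transfer.trans card_T_count

end Topology

end Stmt12

theorem stmt_12 (r : ℕ) (hr : 2 ≤ r) :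
    Nat.card (ConnectedComponents
      {x : Fin (r - 1) → ℝ |
        (∀ i, 0 < x i ∧ x i < 1) ∧
        ¬∃ a b : Fin (r - 1), a ≤ b ∧ ∃ c : ℤ,
          (∑ i ∈ Finset.Icc a b, x i) = (c : ℝ)}) = Nat.factorial (r - 1) := by
  exact Stmt12.main_count (r - 1)
end

section
/- Let n ≥ 2, let σ ∈ S_n be an n-cycle, set j_k = σ^{k−1}(1), and let d_k = ∑_{ℓ=1}^{k}(e_{j_ℓ} − e_{j_ℓ+1}) ∈ ℤ^{ℤ/nℤ} (indices j_ℓ + 1 modulo n). Define φ = (1/n) ∑_{k=1}^{n} d_k ∈ ℚ^{ℤ/nℤ}. Then for every k with 1 ≤ k ≤ n, and for every pair 1 ≤ r ≤ s ≤ n−1, the quantity ∑_{i=r}^{s} (φ_i − (d_k)_i) is strictly between −1 and 1 and is nonzero. -/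
theorem stmt_14 (n : ℕ) [NeZero n] (hn : 2 ≤ n) (σ : Equiv.Perm (ZMod n))
    (hσ : σ.IsCycle ∧ σ.support.card = n)
    (j : ℕ → ZMod n) (hj : ∀ k : ℕ, j k = (σ ^ (k - 1)) 1)
    (d : ℕ → ZMod n → ℤ)
    (hd : ∀ k : ℕ, d k = ∑ ℓ ∈ Finset.Icc 1 k,
      ((Pi.single (j ℓ) 1 : ZMod n → ℤ) - (Pi.single (j ℓ + 1) 1 : ZMod n → ℤ)))
    (φ : ZMod n → ℚ)
    (hφ : ∀ i : ZMod n, φ i = (∑ k ∈ Finset.Icc 1 n, (d k i : ℚ)) / n) :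
    ∀ k ∈ Finset.Icc 1 n, ∀ r s : ℕ, 1 ≤ r → r ≤ s → s ≤ n - 1 →
      (-1 < ∑ i ∈ Finset.Icc r s, (φ (i : ZMod n) - (d k (i : ZMod n) : ℚ)) ∧
       (∑ i ∈ Finset.Icc r s, (φ (i : ZMod n) - (d k (i : ZMod n) : ℚ))) < 1 ∧
       (∑ i ∈ Finset.Icc r s, (φ (i : ZMod n) - (d k (i : ZMod n) : ℚ))) ≠ 0) := by
  obtain ⟨hcyc, hcard⟩ := hσ
  intro k hk r s hr hrs hs
  rw [Finset.mem_Icc] at hk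
  obtain ⟨hk1, hkn⟩ := hk
  have hnne : n ≠ 0 := NeZero.ne n
  have hn0 : (n : ℚ) ≠ 0 := Nat.cast_ne_zero.mpr hnne
  have hnpos : (0 : ℚ) < n := by
    exact_mod_cast Nat.pos_of_ne_zero hnne
  -- cycle facts
  have hsupp : σ.support = Finset.univ :=
    Finset.eq_univ_of_card _ (by rw [hcard, ZMod.card])
  have hcycOn : σ.IsCycleOn ((Finset.univ : Finset (ZMod n)) : Set (ZMod n)) := by
    have h1 := hcyc.isCycleOn
    have h2 : {x | σ x ≠ x} = ((Finset.univ : Finset (ZMod n)) : Set (ZMod n)) := by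
      ext x
      simp [← Equiv.Perm.mem_support, hsupp]
    rwa [h2] at h1
  have hpow : ∀ (a : ZMod n) (m : ℕ), (σ ^ m) a = a ↔ n ∣ m := by
    intro a m
    have := hcycOn.pow_apply_eq (Finset.mem_univ a) (n := m)
    rwa [Finset.card_univ, ZMod.card] at this
  -- injectivity of j on [1, n]
  have hjinj : ∀ a ∈ Finset.Icc 1 n, ∀ b ∈ Finset.Icc 1 n, j a = j b → a = b := by
    have key : ∀ a b : ℕ, 1 ≤ a → a ≤ b → b ≤ n → j a = j b → a = b := by
      intro a b ha hab hbn hjab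
      rw [hj, hj] at hjab
      have h1 : b - 1 = (b - a) + (a - 1) := by omega
      have h2 : (σ ^ (b - a)) ((σ ^ (a - 1)) 1) = (σ ^ (a - 1)) 1 := by
        rw [← Equiv.Perm.mul_apply, ← pow_add, ← h1, ← hjab]
      have h3 := (hpow _ _).mp h2
      have h4 : b - a < n := by omega
      have h5 : b - a = 0 := Nat.eq_zero_of_dvd_of_lt h3 h4
      omega
    intro a ha b hb hab
    rw [Finset.mem_Icc] at ha hb
    rcases le_total a b with h | h
    · exact key a b ha.1 h hb.2 hab
    · exact (key b a hb.1 h ha.2 hab.symm).symm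
  -- surjectivity of j from [1, n]
  have hjsurj : ∀ a : ZMod n, ∃ ℓ, ℓ ∈ Finset.Icc 1 n ∧ j ℓ = a := by
    intro a
    have himg : Finset.image j (Finset.Icc 1 n) = Finset.univ := by
      apply Finset.eq_univ_of_card
      rw [Finset.card_image_of_injOn (fun x hx y hy => hjinj x hx y hy),
        Nat.card_Icc, ZMod.card]
      omega
    have : a ∈ Finset.image j (Finset.Icc 1 n) := himg ▸ Finset.mem_univ a
    simpa [Finset.mem_image] using this
  -- Step A : telescoping
  have stepA : ∀ a : ZMod n,
      (∑ i ∈ Finset.Icc r s, ((Pi.single a 1 : ZMod n → ℤ) ((i : ℕ) : ZMod n)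
        - (Pi.single (a + 1) 1 : ZMod n → ℤ) ((i : ℕ) : ZMod n)))
      = (if ((s : ℕ) : ZMod n) = a then (1 : ℤ) else 0)
        - (if (((r - 1 : ℕ)) : ZMod n) = a then (1 : ℤ) else 0) := by
    intro a
    have hterm : ∀ i ∈ Finset.Icc r s,
        ((Pi.single a 1 : ZMod n → ℤ) ((i : ℕ) : ZMod n)
          - (Pi.single (a + 1) 1 : ZMod n → ℤ) ((i : ℕ) : ZMod n))
        = (if ((i : ℕ) : ZMod n) = a then (1 : ℤ) else 0)
          - (if (((i - 1 : ℕ)) : ZMod n) = a then (1 : ℤ) else 0) := by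
      intro i hi
      rw [Finset.mem_Icc] at hi
      have hi1 : 1 ≤ i := le_trans hr hi.1
      have hc : ((i - 1 : ℕ) : ZMod n) = ((i : ℕ) : ZMod n) - 1 := by
        have h := Nat.cast_sub (R := ZMod n) hi1
        simpa using h
      have h2 : (((i : ℕ) : ZMod n) = a + 1) ↔ ((((i - 1 : ℕ)) : ZMod n) = a) := by
        rw [hc, sub_eq_iff_eq_add]
      simp only [Pi.single_apply, h2]
    rw [Finset.sum_congr rfl hterm]
    -- telescoping sum
    have hKey : ∀ h : ℕ → ℤ,
        (∑ i ∈ Finset.Icc r s, (h i - h (i - 1))) = h s - h (r - 1) := by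
      intro h
      have hIco : Finset.Icc r s = Finset.Ico r (s + 1) := by
        rw [Finset.Ico_add_one_right_eq_Icc]
      rw [hIco, Finset.sum_Ico_eq_sum_range]
      have hcong : ∀ t ∈ Finset.range (s + 1 - r),
          (h (r + t) - h (r + t - 1))
          = ((fun t => h (r - 1 + t)) (t + 1) - (fun t => h (r - 1 + t)) t) := by
        intro t _
        simp only []
        congr 2 <;> omega
      rw [Finset.sum_congr rfl hcong, Finset.sum_range_sub (fun t => h (r - 1 + t))]
      congr 2 <;> omega
    exact hKey (fun m => if ((m : ℕ) : ZMod n) = a then (1 : ℤ) else 0)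
  -- the indicator function g
  set g : ℕ → ℤ := fun ℓ =>
    (if ((s : ℕ) : ZMod n) = j ℓ then (1 : ℤ) else 0)
      - (if (((r - 1 : ℕ)) : ZMod n) = j ℓ then (1 : ℤ) else 0) with hg
  -- Step B : window sum of d k'
  have stepB : ∀ k' : ℕ,
      (∑ i ∈ Finset.Icc r s, d k' ((i : ℕ) : ZMod n)) = ∑ ℓ ∈ Finset.Icc 1 k', g ℓ := by
    intro k'
    calc (∑ i ∈ Finset.Icc r s, d k' ((i : ℕ) : ZMod n))
        = ∑ i ∈ Finset.Icc r s, ∑ ℓ ∈ Finset.Icc 1 k',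
            ((Pi.single (j ℓ) 1 : ZMod n → ℤ) ((i : ℕ) : ZMod n)
              - (Pi.single (j ℓ + 1) 1 : ZMod n → ℤ) ((i : ℕ) : ZMod n)) := by
          refine Finset.sum_congr rfl fun i _ => ?_
          rw [hd k', Finset.sum_apply]
          simp [Pi.sub_apply]
      _ = ∑ ℓ ∈ Finset.Icc 1 k', ∑ i ∈ Finset.Icc r s,
            ((Pi.single (j ℓ) 1 : ZMod n → ℤ) ((i : ℕ) : ZMod n)
              - (Pi.single (j ℓ + 1) 1 : ZMod n → ℤ) ((i : ℕ) : ZMod n)) :=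
          Finset.sum_comm
      _ = ∑ ℓ ∈ Finset.Icc 1 k', g ℓ :=
          Finset.sum_congr rfl fun ℓ _ => by rw [hg]; exact stepA (j ℓ)
  -- cast of window sums
  have h2 : ∀ k' : ℕ, (∑ i ∈ Finset.Icc r s, (d k' ((i : ℕ) : ZMod n) : ℚ))
      = ∑ ℓ ∈ Finset.Icc 1 k', (g ℓ : ℚ) := by
    intro k'
    exact_mod_cast stepB k'
  -- weights
  set w : ℕ → ℚ := fun ℓ => (n : ℚ) + 1 - ℓ - (if ℓ ≤ k then (n : ℚ) else 0) with hw
  -- main computation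
  have main : (∑ i ∈ Finset.Icc r s, (φ ((i : ℕ) : ZMod n) - (d k ((i : ℕ) : ZMod n) : ℚ)))
      = (∑ ℓ ∈ Finset.Icc 1 n, w ℓ * (g ℓ : ℚ)) / n := by
    rw [Finset.sum_sub_distrib]
    have hphi : (∑ i ∈ Finset.Icc r s, φ ((i : ℕ) : ZMod n))
        = (∑ ℓ ∈ Finset.Icc 1 n, ((n : ℚ) + 1 - ℓ) * (g ℓ : ℚ)) / n := by
      have h1 : (∑ i ∈ Finset.Icc r s, φ ((i : ℕ) : ZMod n))
          = (∑ k' ∈ Finset.Icc 1 n, ∑ i ∈ Finset.Icc r s,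
              (d k' ((i : ℕ) : ZMod n) : ℚ)) / n := by
        rw [Finset.sum_comm, Finset.sum_div]
        refine Finset.sum_congr rfl fun i _ => ?_
        rw [hφ]
      have h3 : (∑ k' ∈ Finset.Icc 1 n, ∑ ℓ ∈ Finset.Icc 1 k', (g ℓ : ℚ))
          = ∑ ℓ ∈ Finset.Icc 1 n, ((n : ℚ) + 1 - ℓ) * (g ℓ : ℚ) := by
        rw [Finset.sum_comm' (s := Finset.Icc 1 n) (t := fun k' => Finset.Icc 1 k')
          (t' := Finset.Icc 1 n) (s' := fun ℓ => Finset.Icc ℓ n)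
          (by intro x y; simp only [Finset.mem_Icc]; omega)]
        refine Finset.sum_congr rfl fun ℓ hℓ => ?_
        rw [Finset.mem_Icc] at hℓ
        rw [Finset.sum_const, Nat.card_Icc, nsmul_eq_mul]
        congr 1
        have hle : ℓ ≤ n + 1 := by omega
        push_cast [Nat.cast_sub hle]
        ring
      rw [h1]
      rw [Finset.sum_congr rfl fun k' _ => h2 k', h3]
    have h4 : (∑ ℓ ∈ Finset.Icc 1 k, (g ℓ : ℚ))
        = ∑ ℓ ∈ Finset.Icc 1 n, (if ℓ ≤ k then (1 : ℚ) else 0) * (g ℓ : ℚ) := by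
      have hfil : Finset.Icc 1 k = (Finset.Icc 1 n).filter (fun ℓ => ℓ ≤ k) := by
        ext x
        simp only [Finset.mem_Icc, Finset.mem_filter]
        omega
      rw [hfil, Finset.sum_filter]
      refine Finset.sum_congr rfl fun ℓ _ => ?_
      by_cases h : ℓ ≤ k <;> simp [h]
    have h5 : (∑ ℓ ∈ Finset.Icc 1 n, w ℓ * (g ℓ : ℚ))
        = (∑ ℓ ∈ Finset.Icc 1 n, ((n : ℚ) + 1 - ℓ) * (g ℓ : ℚ))
          - n * ∑ ℓ ∈ Finset.Icc 1 n, (if ℓ ≤ k then (1 : ℚ) else 0) * (g ℓ : ℚ) := by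
      rw [Finset.mul_sum, ← Finset.sum_sub_distrib]
      refine Finset.sum_congr rfl fun ℓ _ => ?_
      by_cases h : ℓ ≤ k <;> simp only [hw, if_pos, if_neg, h, if_true, if_false] <;> ring
    rw [hphi, h2 k, h4, h5, sub_div]
    congr 1
    rw [mul_comm ((n : ℚ)), mul_div_assoc, div_self hn0, mul_one]
  -- evaluate the weighted sum
  obtain ⟨A, hA, hjA⟩ := hjsurj ((s : ℕ) : ZMod n)
  obtain ⟨B, hB, hjB⟩ := hjsurj (((r - 1 : ℕ)) : ZMod n)
  have hsum : (∑ ℓ ∈ Finset.Icc 1 n, w ℓ * (g ℓ : ℚ)) = w A - w B := by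
    have e1 : (∑ ℓ ∈ Finset.Icc 1 n,
        w ℓ * (if ((s : ℕ) : ZMod n) = j ℓ then (1 : ℚ) else 0)) = w A := by
      rw [Finset.sum_eq_single A]
      · simp [hjA]
      · intro b hb hbA
        have hne : ¬ ((s : ℕ) : ZMod n) = j b := by
          intro hcon
          exact hbA (hjinj b hb A hA (hcon.symm.trans hjA.symm))
        simp [hne]
      · intro h; exact absurd hA h
    have e2 : (∑ ℓ ∈ Finset.Icc 1 n,
        w ℓ * (if (((r - 1 : ℕ)) : ZMod n) = j ℓ then (1 : ℚ) else 0)) = w B := by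
      rw [Finset.sum_eq_single B]
      · simp [hjB]
      · intro b hb hbB
        have hne : ¬ (((r - 1 : ℕ)) : ZMod n) = j b := by
          intro hcon
          exact hbB (hjinj b hb B hB (hcon.symm.trans hjB.symm))
        simp [hne]
      · intro h; exact absurd hB h
    calc (∑ ℓ ∈ Finset.Icc 1 n, w ℓ * (g ℓ : ℚ))
        = ∑ ℓ ∈ Finset.Icc 1 n,
            (w ℓ * (if ((s : ℕ) : ZMod n) = j ℓ then (1 : ℚ) else 0)
              - w ℓ * (if (((r - 1 : ℕ)) : ZMod n) = j ℓ then (1 : ℚ) else 0)) := by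
          refine Finset.sum_congr rfl fun ℓ _ => ?_
          rw [hg]
          push_cast [apply_ite (Int.cast : ℤ → ℚ)]
          ring
      _ = w A - w B := by rw [Finset.sum_sub_distrib, e1, e2]
  -- A ≠ B
  have hAB : A ≠ B := by
    intro h
    have hcast : ((s : ℕ) : ZMod n) = (((r - 1 : ℕ)) : ZMod n) := by
      rw [← hjA, ← hjB, h]
    have hv := congrArg ZMod.val hcast
    rw [ZMod.val_cast_of_lt (by omega), ZMod.val_cast_of_lt (by omega)] at hv
    omega
  rw [Finset.mem_Icc] at hA hB
  -- bounds on the weights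
  have hwb : ∀ ℓ, 1 ≤ ℓ → ℓ ≤ n → (1 - (k : ℚ) ≤ w ℓ ∧ w ℓ ≤ (n : ℚ) - k) := by
    intro ℓ h1' h2'
    have c1 : (1 : ℚ) ≤ ℓ := by exact_mod_cast h1'
    have c2 : (ℓ : ℚ) ≤ n := by exact_mod_cast h2'
    have ck : (1 : ℚ) ≤ k := by exact_mod_cast hk1
    have ckn : (k : ℚ) ≤ n := by exact_mod_cast hkn
    by_cases h : ℓ ≤ k
    · have hlk : (ℓ : ℚ) ≤ k := by exact_mod_cast h
      simp only [hw, if_pos h]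
      constructor <;> linarith
    · have hlk : (k : ℚ) + 1 ≤ ℓ := by exact_mod_cast Nat.succ_le_of_lt (not_le.mp h)
      simp only [hw, if_neg h]
      constructor <;> linarith
  have hAk : (1 : ℚ) ≤ A := by exact_mod_cast hA.1
  have hAn : (A : ℚ) ≤ n := by exact_mod_cast hA.2
  have hBk : (1 : ℚ) ≤ B := by exact_mod_cast hB.1
  have hBn : (B : ℚ) ≤ n := by exact_mod_cast hB.2
  -- the weights at A and B differ
  have hwne : w A ≠ w B := by
    intro h
    simp only [hw] at h
    by_cases h1 : A ≤ k <;> by_cases h2 : B ≤ k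
    · rw [if_pos h1, if_pos h2] at h
      have : (A : ℚ) = B := by linarith
      exact hAB (by exact_mod_cast this)
    · rw [if_pos h1, if_neg h2] at h
      linarith
    · rw [if_neg h1, if_pos h2] at h
      linarith
    · rw [if_neg h1, if_neg h2] at h
      have : (A : ℚ) = B := by linarith
      exact hAB (by exact_mod_cast this)
  obtain ⟨hwA1, hwA2⟩ := hwb A hA.1 hA.2
  obtain ⟨hwB1, hwB2⟩ := hwb B hB.1 hB.2
  have ck : (1 : ℚ) ≤ k := by exact_mod_cast hk1
  rw [main, hsum]
  refine ⟨?_, ?_, ?_⟩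
  · rw [lt_div_iff₀ hnpos]
    linarith
  · rw [div_lt_one hnpos]
    linarith
  · exact div_ne_zero (sub_ne_zero.mpr hwne) hn0
end

section
/- Let n ≥ 2 and let f : C_{n−1} → ℤ be a function on the set C_{n−1} of intervals of consecutive integers in {1, …, n−1} satisfying 0 ≤ f(I∪J) − f(I) − f(J) ≤ 1 whenever I, J ∈ C_{n−1} are disjoint with I ∪ J ∈ C_{n−1}. Then there exists a point x = (x_1, …, x_{n−1}) ∈ ℝ^{n−1} such that f(I) < ∑_{i∈I} x_i < f(I) + 1 for every I ∈ C_{n−1}. -/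
namespace Stmt15Aux

/-- partial sums: `g a = f {1,…,a}`, with `g 0 = 0`. -/
def gfun (f : Finset ℕ → ℤ) (a : ℕ) : ℤ := if a = 0 then 0 else f (Finset.Icc 1 a)

/-- deficiency `Δ a b = g b − g a − f {a+1,…,b}`. -/
def dfun (f : Finset ℕ → ℤ) (a b : ℕ) : ℤ := gfun f b - gfun f a - f (Finset.Icc (a + 1) b)

/-- the tournament relation. -/
def arrow (f : Finset ℕ → ℤ) (a b : ℕ) : Prop :=
  (a < b ∧ dfun f a b = 0) ∨ (b < a ∧ dfun f b a = 1)

open Classical in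
/-- rank in the tournament. -/
noncomputable def rank (n : ℕ) (f : Finset ℕ → ℤ) (b : ℕ) : ℕ :=
  ((Finset.range n).filter (fun a => arrow f a b)).card

section

variable {n : ℕ} {f : Finset ℕ → ℤ} (hn : 2 ≤ n)
  (hf : ∀ I J : Finset ℕ, IsIvl n I → IsIvl n J → Disjoint I J → IsIvl n (I ∪ J) →
    0 ≤ f (I ∪ J) - f I - f J ∧ f (I ∪ J) - f I - f J ≤ 1)

include hf

lemma d01 {a b : ℕ} (hab : a < b) (hb : b ≤ n - 1) : dfun f a b = 0 ∨ dfun f a b = 1 := by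
  rcases Nat.eq_zero_or_pos a with ha | ha
  · left
    subst ha
    have hgb : gfun f b = f (Finset.Icc 1 b) := if_neg (by omega)
    unfold dfun
    rw [hgb]
    simp [gfun]
  · have hI : IsIvl n (Finset.Icc 1 a) := ⟨1, a, le_refl _, ha, by omega, rfl⟩
    have hJ : IsIvl n (Finset.Icc (a + 1) b) := ⟨a + 1, b, by omega, hab, hb, rfl⟩
    have hU : Finset.Icc 1 a ∪ Finset.Icc (a + 1) b = Finset.Icc 1 b := by
      ext x; simp only [Finset.mem_union, Finset.mem_Icc]; omega
    have hD : Disjoint (Finset.Icc 1 a) (Finset.Icc (a + 1) b) := by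
      rw [Finset.disjoint_left]
      intro x hx hx'
      simp only [Finset.mem_Icc] at hx hx'
      omega
    have := hf _ _ hI hJ hD (hU ▸ ⟨1, b, le_refl _, by omega, hb, rfl⟩)
    rw [hU] at this
    have hga : gfun f a = f (Finset.Icc 1 a) := if_neg (by omega)
    have hgb : gfun f b = f (Finset.Icc 1 b) := if_neg (by omega)
    unfold dfun
    rw [hga, hgb]
    omega

lemma dkey {a b c : ℕ} (hab : a < b) (hbc : b < c) (hc : c ≤ n - 1) :
    ∃ e : ℤ, 0 ≤ e ∧ e ≤ 1 ∧ dfun f a c = dfun f a b + dfun f b c - e := by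
  refine ⟨f (Finset.Icc (a + 1) c) - f (Finset.Icc (a + 1) b) - f (Finset.Icc (b + 1) c),
    ?_, ?_, by unfold dfun; ring⟩ <;>
  · have hI : IsIvl n (Finset.Icc (a + 1) b) := ⟨a + 1, b, by omega, hab, by omega, rfl⟩
    have hJ : IsIvl n (Finset.Icc (b + 1) c) := ⟨b + 1, c, by omega, hbc, hc, rfl⟩
    have hU : Finset.Icc (a + 1) b ∪ Finset.Icc (b + 1) c = Finset.Icc (a + 1) c := by
      ext x; simp only [Finset.mem_union, Finset.mem_Icc]; omega
    have hD : Disjoint (Finset.Icc (a + 1) b) (Finset.Icc (b + 1) c) := by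
      rw [Finset.disjoint_left]
      intro x hx hx'
      simp only [Finset.mem_Icc] at hx hx'
      omega
    have := hf _ _ hI hJ hD (hU ▸ ⟨a + 1, c, by omega, by omega, hc, rfl⟩)
    rw [hU] at this
    omega

lemma arrow_trans {a b c : ℕ} (ha : a ≤ n - 1) (hb : b ≤ n - 1) (hc : c ≤ n - 1)
    (h1 : arrow f a b) (h2 : arrow f b c) : arrow f a c := by
  rcases h1 with ⟨hab, e1⟩ | ⟨hba, e1⟩ <;> rcases h2 with ⟨hbc, e2⟩ | ⟨hcb, e2⟩
  · -- a < b < c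
    obtain ⟨e, he0, he1, hid⟩ := dkey hf hab hbc hc
    have := d01 hf (hab.trans hbc) hc
    exact Or.inl ⟨hab.trans hbc, by omega⟩
  · -- a < b, c < b
    rcases lt_trichotomy a c with hac | rfl | hca
    · obtain ⟨e, he0, he1, hid⟩ := dkey hf hac hcb hb
      have := d01 hf hac hc
      exact Or.inl ⟨hac, by omega⟩
    · omega
    · obtain ⟨e, he0, he1, hid⟩ := dkey hf hca hab hb
      have := d01 hf hca ha
      exact Or.inr ⟨hca, by omega⟩
  · -- b < a, b < c
    rcases lt_trichotomy a c with hac | rfl | hca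
    · obtain ⟨e, he0, he1, hid⟩ := dkey hf hba hac hc
      have := d01 hf hac hc
      exact Or.inl ⟨hac, by omega⟩
    · omega
    · obtain ⟨e, he0, he1, hid⟩ := dkey hf hbc hca ha
      have := d01 hf hca ha
      exact Or.inr ⟨hca, by omega⟩
  · -- c < b < a
    obtain ⟨e, he0, he1, hid⟩ := dkey hf hcb hba ha
    have := d01 hf (hcb.trans hba) ha
    exact Or.inr ⟨hcb.trans hba, by omega⟩

include hn

lemma rank_lt {a b : ℕ} (ha : a ≤ n - 1) (hb : b ≤ n - 1) (h : arrow f a b) :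
    rank n f a < rank n f b := by
  classical
  apply Finset.card_lt_card
  rw [Finset.ssubset_def]
  constructor
  · intro c hc
    simp only [Finset.mem_filter, Finset.mem_range] at hc ⊢
    exact ⟨hc.1, arrow_trans hf (by omega) ha hb hc.2 h⟩
  · intro hsub
    have hamem : a ∈ (Finset.range n).filter (fun c => arrow f c b) := by
      simp only [Finset.mem_filter, Finset.mem_range]
      exact ⟨by omega, h⟩
    have := hsub hamem
    simp only [Finset.mem_filter] at this
    rcases this.2 with ⟨h', _⟩ | ⟨h', _⟩ <;> omega

lemma rank_le {b : ℕ} (hb : b ≤ n - 1) : rank n f b ≤ n - 1 := by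
  classical
  have hsub : (Finset.range n).filter (fun a => arrow f a b) ⊆ (Finset.range n).erase b := by
    intro c hc
    simp only [Finset.mem_filter, Finset.mem_range] at hc
    rw [Finset.mem_erase]
    refine ⟨?_, Finset.mem_range.mpr hc.1⟩
    rcases hc.2 with ⟨h', _⟩ | ⟨h', _⟩ <;> omega
  calc rank n f b ≤ ((Finset.range n).erase b).card := Finset.card_le_card hsub
    _ = (Finset.range n).card - 1 :=
        Finset.card_erase_of_mem (Finset.mem_range.mpr (by omega))
    _ = n - 1 := by rw [Finset.card_range]

end

end Stmt15Aux

open Stmt15Aux in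
theorem stmt_15 (n : ℕ) (hn : 2 ≤ n) (f : Finset ℕ → ℤ)
    (hf : ∀ I J : Finset ℕ, IsIvl n I → IsIvl n J → Disjoint I J → IsIvl n (I ∪ J) →
      0 ≤ f (I ∪ J) - f I - f J ∧ f (I ∪ J) - f I - f J ≤ 1) :
    ∃ x : ℕ → ℝ, ∀ I : Finset ℕ, IsIvl n I →
      (f I : ℝ) < ∑ i ∈ I, x i ∧ (∑ i ∈ I, x i) < (f I : ℝ) + 1 := by
  classical
  set h : ℕ → ℝ := fun s => (gfun f s : ℝ) + (rank n f s : ℝ) / n with hhdef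
  refine ⟨fun i => h i - h (i - 1), ?_⟩
  rintro I ⟨r, s, hr, hrs, hs, rfl⟩
  -- telescoping sum
  have htel : ∑ i ∈ Finset.Icc r s, (h i - h (i - 1)) = h s - h (r - 1) := by
    rw [← Finset.Ico_add_one_right_eq_Icc, Finset.sum_Ico_eq_sum_range]
    have hterm : ∀ j, h (r + j) - h (r + j - 1) =
        (fun j => h (r - 1 + j)) (j + 1) - (fun j => h (r - 1 + j)) j := by
      intro j
      simp only
      rw [show r + j - 1 = r - 1 + j by omega, show r + j = r - 1 + (j + 1) by omega]
    calc ∑ j ∈ Finset.range (s + 1 - r), (h (r + j) - h (r + j - 1))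
        = ∑ j ∈ Finset.range (s + 1 - r),
            ((fun j => h (r - 1 + j)) (j + 1) - (fun j => h (r - 1 + j)) j) := by
          exact Finset.sum_congr rfl fun j _ => hterm j
      _ = h (r - 1 + (s + 1 - r)) - h (r - 1 + 0) := by
          rw [Finset.sum_range_sub (fun j => h (r - 1 + j))]
      _ = h s - h (r - 1) := by rw [show r - 1 + (s + 1 - r) = s by omega, Nat.add_zero]
  rw [htel]
  -- basic facts
  have hlt : r - 1 < s := by omega
  have hd : dfun f (r - 1) s = gfun f s - gfun f (r - 1) - f (Finset.Icc r s) := by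
    unfold dfun
    rw [show r - 1 + 1 = r by omega]
  have hnR : (0 : ℝ) < (n : ℝ) := by positivity
  have hranks : rank n f s ≤ n - 1 := rank_le hn hf hs
  have hrankr : rank n f (r - 1) ≤ n - 1 := rank_le hn hf (by omega : r - 1 ≤ n - 1)
  rcases d01 hf hlt hs with h0 | h1
  · -- Δ = 0 : arrow (r-1) s, rank increases
    have harr : arrow f (r - 1) s := Or.inl ⟨hlt, h0⟩
    have hrk : rank n f (r - 1) < rank n f s := rank_lt hn hf (by omega) hs harr
    have hg : (gfun f s : ℝ) - (gfun f (r - 1) : ℝ) = (f (Finset.Icc r s) : ℝ) := by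
      have : gfun f s - gfun f (r - 1) = f (Finset.Icc r s) := by omega
      rw [← Int.cast_sub, this]
    have hcast : (rank n f (r - 1) : ℝ) < (rank n f s : ℝ) := by exact_mod_cast hrk
    have hq0 : (0 : ℝ) < ((rank n f s : ℝ) - (rank n f (r - 1) : ℝ)) / n :=
      div_pos (by linarith) hnR
    have hq1 : ((rank n f s : ℝ) - (rank n f (r - 1) : ℝ)) / n < 1 := by
      rw [div_lt_one hnR]
      have : (rank n f s : ℝ) < n := by exact_mod_cast (by omega : rank n f s < n)
      have h0' : (0 : ℝ) ≤ (rank n f (r - 1) : ℝ) := Nat.cast_nonneg _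
      linarith
    have hsub : ((rank n f s : ℝ) - (rank n f (r - 1) : ℝ)) / n
        = (rank n f s : ℝ) / n - (rank n f (r - 1) : ℝ) / n := sub_div _ _ _
    simp only [hhdef]
    constructor <;> linarith [hq0, hq1, hg, hsub]
  · -- Δ = 1 : arrow s (r-1), rank decreases
    have harr : arrow f s (r - 1) := Or.inr ⟨hlt, h1⟩
    have hrk : rank n f s < rank n f (r - 1) := rank_lt hn hf hs (by omega) harr
    have hg : (gfun f s : ℝ) - (gfun f (r - 1) : ℝ) = (f (Finset.Icc r s) : ℝ) + 1 := by
      have : gfun f s - gfun f (r - 1) = f (Finset.Icc r s) + 1 := by omega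
      rw [← Int.cast_sub, this]; push_cast; ring
    have hcast : (rank n f s : ℝ) < (rank n f (r - 1) : ℝ) := by exact_mod_cast hrk
    have hq0 : ((rank n f s : ℝ) - (rank n f (r - 1) : ℝ)) / n < 0 :=
      div_neg_of_neg_of_pos (by linarith) hnR
    have hq1 : (-1 : ℝ) < ((rank n f s : ℝ) - (rank n f (r - 1) : ℝ)) / n := by
      rw [show (-1 : ℝ) = -(n : ℝ) / n by field_simp, div_lt_div_iff_of_pos_right hnR]
      have : (rank n f (r - 1) : ℝ) < n := by exact_mod_cast (by omega : rank n f (r - 1) < n)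
      have h0' : (0 : ℝ) ≤ (rank n f s : ℝ) := Nat.cast_nonneg _
      linarith
    have hsub : ((rank n f s : ℝ) - (rank n f (r - 1) : ℝ)) / n
        = (rank n f s : ℝ) / n - (rank n f (r - 1) : ℝ) / n := sub_div _ _ _
    simp only [hhdef]
    constructor <;> linarith [hq0, hq1, hg, hsub]
end
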